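/- arXiv:2301.08233 — 10 statements merged into one kernel-verified Lean document; each statement's English description precedes it below -/
import Mathlib

section
/- Let (X, <) be a dense linear order without endpoints admitting a dense subset of cardinality less than κ. Then X equipped with the Sorgenfrey topology (generated by half-open intervals [x,y) with x < y) is hereditarily κ-compact. -/
universe u

/-- `κ`-compactness: every open cover has a subcover of cardinality less than `κ`. -/
def KCompact (κ : Cardinal.{u}) {X : Type u} (t : TopologicalSpace X) : Prop :=
  ∀ 𝒰 : Set (Set X), (∀ U ∈ 𝒰, t.IsOpen U) → ⋃₀ 𝒰 = Set.univ →
    ∃ 𝒰₀ ⊆ 𝒰, Cardinal.mk 𝒰₀ < κ ∧ ⋃₀ 𝒰₀ = Set.univ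

/-- Hereditarily `κ`-compact: every subspace, with the subspace topology, is `κ`-compact. -/
def HeredKCompact (κ : Cardinal.{u}) {X : Type u} (t : TopologicalSpace X) : Prop :=
  ∀ Y : Set X, KCompact κ (TopologicalSpace.induced (Subtype.val : Y → X) t)

/-- The Sorgenfrey topology on a linear order: generated by the half-open intervals `[x, y)`. -/
def sorgenfrey (X : Type u) [LinearOrder X] : TopologicalSpace X :=
  TopologicalSpace.generateFrom {s | ∃ x y : X, x < y ∧ s = Set.Ico x y}

lemma sorgen_basic {X : Type u} [LinearOrder X] [NoMaxOrder X] {V : Set X}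
    (hV : (sorgenfrey X).IsOpen V) :
    ∀ p ∈ V, ∃ q, p < q ∧ Set.Ico p q ⊆ V := by
  induction hV with
  | basic s hs =>
      obtain ⟨x, y, hxy, rfl⟩ := hs
      exact fun p hp => ⟨y, hp.2, fun z hz => ⟨le_trans hp.1 hz.1, hz.2⟩⟩
  | univ =>
      intro p _
      obtain ⟨q, hq⟩ := exists_gt p
      exact ⟨q, hq, fun _ _ => trivial⟩
  | inter s t _ _ ihs iht =>
      intro p hp
      obtain ⟨q1, hq1, h1⟩ := ihs p hp.1
      obtain ⟨q2, hq2, h2⟩ := iht p hp.2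
      exact ⟨min q1 q2, lt_min hq1 hq2, fun z hz =>
        ⟨h1 ⟨hz.1, lt_of_lt_of_le hz.2 (min_le_left _ _)⟩,
         h2 ⟨hz.1, lt_of_lt_of_le hz.2 (min_le_right _ _)⟩⟩⟩
  | sUnion S _ ih =>
      intro p hp
      obtain ⟨s, hs, hps⟩ := hp
      obtain ⟨q, hq, h⟩ := ih s hs p hps
      exact ⟨q, hq, fun z hz => ⟨s, hs, h hz⟩⟩

theorem stmt_3 (κ : Cardinal.{u}) (hκ : Cardinal.aleph0 ≤ κ)
    (X : Type u) [LinearOrder X] [DenselyOrdered X] [NoMinOrder X] [NoMaxOrder X]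
    (D : Set X) (hDdense : ∀ x y : X, x < y → ∃ d ∈ D, x < d ∧ d < y)
    (hDsmall : Cardinal.mk D < κ) :
    HeredKCompact κ (sorgenfrey X) := by
  intro Y 𝒰 hopen hcov
  classical
  by_cases hY : Nonempty ↥Y
  · -- nonempty case
    have hstep : ∀ p : ↥Y, ∃ (U : Set ↥Y) (q : X), U ∈ 𝒰 ∧ (p : X) < q ∧
        ∀ z : ↥Y, (p : X) ≤ (z : X) → (z : X) < q → z ∈ U := by
      intro p
      have hpmem : p ∈ ⋃₀ 𝒰 := by rw [hcov]; trivial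
      obtain ⟨U, hU, hpU⟩ := hpmem
      obtain ⟨V, hV, rfl⟩ := hopen U hU
      obtain ⟨q, hq, hIco⟩ := sorgen_basic hV (p : X) hpU
      exact ⟨_, q, hU, hq, fun z h1 h2 => hIco ⟨h1, h2⟩⟩
    choose U q hU hq hsub using hstep
    have hdall : ∀ p : ↥Y, ∃ d ∈ D, (p : X) < d ∧ d < q p := fun p => hDdense _ _ (hq p)
    choose d hdD hd1 hd2 using hdall
    set A : Set ↥Y := {p | ∃ p₀ : ↥Y, (p₀ : X) < (p : X) ∧ (p : X) < q p₀} with hA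
    set C : ↥D × ↥D → Prop := fun de => ∃ p₀ : ↥Y, (p₀ : X) ≤ (de.1 : X) ∧ (de.2 : X) ≤ q p₀
      with hC
    set F : ↥D × ↥D → Set ↥Y := fun de => if h : C de then U h.choose else U hY.some with hF
    refine ⟨(U '' Aᶜ) ∪ Set.range F, ?_, ?_, ?_⟩
    · rintro W (⟨p, _, rfl⟩ | ⟨de, rfl⟩)
      · exact hU p
      · simp only [hF]; split <;> apply hU
    · refine lt_of_le_of_lt (Cardinal.mk_union_le _ _) (Cardinal.add_lt_of_lt hκ ?_ ?_)
      · -- image part: injection Aᶜ → D via d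
        have key : ∀ (p p' : ↥Y), p' ∉ A → (p : X) < (p' : X) → d p < d p' := by
          intro p p' hp' hlt
          have hqle : q p ≤ (p' : X) := by
            by_contra h
            push_neg at h
            exact hp' ⟨p, hlt, h⟩
          exact lt_of_lt_of_le (hd2 p) (hqle.trans (le_of_lt (hd1 p')))
        have hinj : Function.Injective
            (fun p : ↥(Aᶜ) => (⟨d p.val, hdD p.val⟩ : ↥D)) := by
          intro a b hab
          have hdab : d a.val = d b.val := congrArg Subtype.val hab
          rcases lt_trichotomy ((a.val : X)) ((b.val : X)) with h | h | h
          · exact absurd hdab (ne_of_lt (key a.val b.val b.2 h))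
          · exact Subtype.ext (Subtype.ext h)
          · exact absurd hdab.symm (ne_of_lt (key b.val a.val a.2 h))
        exact lt_of_le_of_lt
          ((Cardinal.mk_image_le).trans (Cardinal.mk_le_of_injective hinj)) hDsmall
      · refine lt_of_le_of_lt (Cardinal.mk_range_le) ?_
        exact Cardinal.mul_lt_of_lt hκ hDsmall hDsmall
    · apply Set.eq_univ_of_forall
      intro z
      by_cases hz : z ∈ A
      · obtain ⟨p₀, h1, h2⟩ := hz
        obtain ⟨e, heD, he1, he2⟩ := hDdense (z : X) (q p₀) h2
        obtain ⟨d', hd'D, hdd1, hdd2⟩ := hDdense (p₀ : X) (z : X) h1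
        have hCde : C (⟨d', hd'D⟩, ⟨e, heD⟩) := ⟨p₀, le_of_lt hdd1, le_of_lt he2⟩
        refine Set.mem_sUnion.2 ⟨F (⟨d', hd'D⟩, ⟨e, heD⟩), Or.inr ⟨_, rfl⟩, ?_⟩
        have hspec := hCde.choose_spec
        simp only [hF, dif_pos hCde]
        exact hsub hCde.choose z (le_trans hspec.1 (le_of_lt hdd2))
          (lt_of_lt_of_le he1 hspec.2)
      · exact ⟨U z, Or.inl ⟨z, hz, rfl⟩, hsub z z le_rfl (hq z)⟩
  · refine ⟨∅, Set.empty_subset _, ?_, ?_⟩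
    · rw [Cardinal.mk_emptyCollection]
      exact lt_of_lt_of_le Cardinal.aleph0_pos hκ
    · rw [Set.sUnion_empty]
      exact (Set.eq_univ_of_forall fun z => (hY ⟨z⟩).elim)
end

section
/- Let κ > ω be a cardinal. Suppose there is a dense linear order (X,<) without endpoints with a dense subset of size less than κ and |X| = κ. Then there exists a topological space Y of weight at most κ such that Y is κ-compact but Y × Y is not κ-compact. -/
universe u

/-- The weight of a topological space: the least cardinality of a base. -/
noncomputable def tweight {X : Type u} (t : TopologicalSpace X) : Cardinal.{u} :=
  sInf {c | ∃ B : Set (Set X), @TopologicalSpace.IsTopologicalBasis X t B ∧ Cardinal.mk B = c}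

open Set TopologicalSpace Cardinal

section Sorg

variable {X : Type u} [LinearOrder X]

/-- The basic sets of the one-sided (lower-limit) Sorgenfrey topology. -/
def sorgB (X : Type u) [LinearOrder X] : Set (Set X) :=
  Set.range fun p : X × X => Set.Ico p.1 p.2

/-- The one-sided Sorgenfrey topology. -/
def sorgT (X : Type u) [LinearOrder X] : TopologicalSpace X :=
  TopologicalSpace.generateFrom (sorgB X)

lemma sorgB_isBasis [NoMaxOrder X] :
    @TopologicalSpace.IsTopologicalBasis X (sorgT X) (sorgB X) := by
  letI := sorgT X
  refine TopologicalSpace.IsTopologicalBasis.mk ?_ ?_ rfl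
  · rintro _ ⟨⟨a, b⟩, rfl⟩ _ ⟨⟨c, d⟩, rfl⟩ x hx
    refine ⟨Set.Ico (a ⊔ c) (b ⊓ d), ⟨(a ⊔ c, b ⊓ d), rfl⟩, ?_, ?_⟩
    · rw [← Set.Ico_inter_Ico]; exact hx
    · rw [← Set.Ico_inter_Ico]
  · ext x
    simp only [Set.mem_sUnion, Set.mem_univ, iff_true]
    obtain ⟨b, hb⟩ := exists_gt x
    exact ⟨Set.Ico x b, ⟨(x, b), rfl⟩, le_refl x, hb⟩

lemma sorg_isOpen_Ici [NoMaxOrder X] (x : X) : (sorgT X).IsOpen (Set.Ici x) := by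
  letI := sorgT X
  have : IsOpen (Set.Ici x) := by
    rw [(sorgB_isBasis (X := X)).isOpen_iff]
    intro a ha
    obtain ⟨b, hb⟩ := exists_gt a
    exact ⟨Set.Ico a b, ⟨(a, b), rfl⟩, ⟨le_refl a, hb⟩, fun z hz => le_trans ha hz.1⟩
  exact this

lemma sorg_kcompact {κ : Cardinal.{u}} (hκ : Cardinal.aleph0 < κ) [NoMaxOrder X]
    (D : Set X) (hDdense : ∀ x y : X, x < y → ∃ d ∈ D, x < d ∧ d < y)
    (hDsmall : Cardinal.mk D < κ) : KCompact κ (sorgT X) := by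
  letI := sorgT X
  intro 𝒰 hopen hcov
  have hex : ∀ x : X, ∃ b U, x < b ∧ U ∈ 𝒰 ∧ Set.Ico x b ⊆ U := by
    intro x
    have hx : x ∈ ⋃₀ 𝒰 := hcov ▸ Set.mem_univ x
    obtain ⟨U, hU, hxU⟩ := hx
    obtain ⟨v, hv, hxv, hvU⟩ :=
      (sorgB_isBasis (X := X)).exists_subset_of_mem_open hxU (hopen U hU)
    obtain ⟨⟨a, b⟩, rfl⟩ := hv
    exact ⟨b, U, hxv.2, hU, fun z hz => hvU ⟨le_trans hxv.1 hz.1, hz.2⟩⟩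
  choose f U hf hU𝒰 hsub using hex
  classical
  set Bad : Set X := {x : X | ∀ y, x ∉ Set.Ioo y (f y)} with hBad
  -- Bad is small
  have hd : ∀ x : Bad, ∃ d ∈ D, (x : X) < d ∧ d < f x := fun x => hDdense _ _ (hf x)
  choose dfun hdD hd1 hd2 using hd
  have key : ∀ x y : Bad, (x : X) < y → (dfun x : X) < dfun y := by
    intro x y hxy
    have h1 : f (x : X) ≤ y := by
      by_contra h
      exact y.2 (x : X) ⟨hxy, lt_of_not_ge h⟩
    exact lt_of_lt_of_le (hd2 x) (le_trans h1 (le_of_lt (hd1 y)))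
  have hdinj : Function.Injective fun x : Bad => (⟨dfun x, hdD x⟩ : D) := by
    intro x y hxy
    have hval : dfun x = dfun y := congrArg Subtype.val hxy
    rcases lt_trichotomy (x : X) (y : X) with h | h | h
    · exact absurd hval (ne_of_lt (key x y h))
    · exact Subtype.ext h
    · exact absurd hval.symm (ne_of_lt (key y x h))
  have hBadcard : Cardinal.mk Bad ≤ Cardinal.mk D := Cardinal.mk_le_of_injective hdinj
  -- good pairs
  set P : Set (X × X) :=
    {p | p.1 ∈ D ∧ p.2 ∈ D ∧ ∃ y, Set.Ioo p.1 p.2 ⊆ Set.Ioo y (f y)} with hP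
  have hyex : ∀ p : P, ∃ y, Set.Ioo (p : X × X).1 (p : X × X).2 ⊆ Set.Ioo y (f y) :=
    fun p => p.2.2.2
  choose w hw using hyex
  have hPinj : Function.Injective fun p : P =>
      ((⟨(p : X × X).1, p.2.1⟩ : D), (⟨(p : X × X).2, p.2.2.1⟩ : D)) := by
    intro p q hpq
    apply Subtype.ext
    have h1 : (p : X × X).1 = (q : X × X).1 := congrArg (Subtype.val ∘ Prod.fst) hpq
    have h2 : (p : X × X).2 = (q : X × X).2 := congrArg (Subtype.val ∘ Prod.snd) hpq
    exact Prod.ext h1 h2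
  have hPcard : Cardinal.mk P < κ := by
    calc Cardinal.mk P ≤ Cardinal.mk (D × D) := Cardinal.mk_le_of_injective hPinj
    _ = Cardinal.mk D * Cardinal.mk D := by simp [Cardinal.mk_prod]
    _ < κ := Cardinal.mul_lt_of_lt hκ.le hDsmall hDsmall
  refine ⟨Set.range (fun x : Bad => U (x : X)) ∪ Set.range (fun p : P => U (w p)),
    ?_, ?_, ?_⟩
  · rintro V (⟨x, rfl⟩ | ⟨p, rfl⟩) <;> exact hU𝒰 _
  · refine lt_of_le_of_lt (Cardinal.mk_union_le _ _) ?_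
    refine Cardinal.add_lt_of_lt hκ.le ?_ ?_
    · exact lt_of_le_of_lt (le_trans Cardinal.mk_range_le hBadcard) hDsmall
    · exact lt_of_le_of_lt Cardinal.mk_range_le hPcard
  · ext z
    simp only [Set.mem_sUnion, Set.mem_univ, iff_true]
    by_cases hz : z ∈ Bad
    · exact ⟨U z, Or.inl ⟨⟨z, hz⟩, rfl⟩, hsub z ⟨le_refl z, hf z⟩⟩
    · simp only [hBad, Set.mem_setOf_eq, not_forall, not_not] at hz
      obtain ⟨y, hy⟩ := hz
      obtain ⟨d, hdD', hd1', hd2'⟩ := hDdense y z hy.1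
      obtain ⟨d', hdD'', hd1'', hd2''⟩ := hDdense z (f y) hy.2
      have hpP : (d, d') ∈ P := by
        refine ⟨hdD', hdD'', y, fun t ht => ⟨lt_trans hd1' ht.1, lt_trans ht.2 hd2''⟩⟩
      have hzdd : z ∈ Set.Ioo d d' := ⟨hd2', hd1''⟩
      have hzIoo := hw ⟨(d, d'), hpP⟩ hzdd
      exact ⟨U (w ⟨(d, d'), hpP⟩), Or.inr ⟨⟨(d, d'), hpP⟩, rfl⟩,
        hsub _ ⟨le_of_lt hzIoo.1, hzIoo.2⟩⟩

end Sorg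

lemma kcompact_sum {κ : Cardinal.{u}} (hκ : Cardinal.aleph0 < κ)
    {A B : Type u} {t1 : TopologicalSpace A} {t2 : TopologicalSpace B}
    (h1 : KCompact κ t1) (h2 : KCompact κ t2) :
    KCompact κ (@instTopologicalSpaceSum A B t1 t2) := by
  letI := t1; letI := t2
  intro 𝒰 hopen hcov
  classical
  have c1 : ⋃₀ ((fun U => Sum.inl ⁻¹' U) '' 𝒰) = Set.univ := by
    ext a
    simp only [Set.mem_sUnion, Set.mem_univ, iff_true]
    have : (Sum.inl a : A ⊕ B) ∈ ⋃₀ 𝒰 := hcov ▸ Set.mem_univ _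
    obtain ⟨U, hU, haU⟩ := this
    exact ⟨Sum.inl ⁻¹' U, ⟨U, hU, rfl⟩, haU⟩
  have c2 : ⋃₀ ((fun U => Sum.inr ⁻¹' U) '' 𝒰) = Set.univ := by
    ext b
    simp only [Set.mem_sUnion, Set.mem_univ, iff_true]
    have : (Sum.inr b : A ⊕ B) ∈ ⋃₀ 𝒰 := hcov ▸ Set.mem_univ _
    obtain ⟨U, hU, hbU⟩ := this
    exact ⟨Sum.inr ⁻¹' U, ⟨U, hU, rfl⟩, hbU⟩
  obtain ⟨V₁, hV₁sub, hV₁card, hV₁cov⟩ := h1 _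
    (by rintro _ ⟨U, hU, rfl⟩; exact IsOpen.preimage continuous_inl (hopen U hU)) c1
  obtain ⟨V₂, hV₂sub, hV₂card, hV₂cov⟩ := h2 _
    (by rintro _ ⟨U, hU, rfl⟩; exact IsOpen.preimage continuous_inr (hopen U hU)) c2
  have hF : ∀ V : V₁, ∃ U ∈ 𝒰, Sum.inl ⁻¹' U = (V : Set A) := fun V => hV₁sub V.2
  have hG : ∀ V : V₂, ∃ U ∈ 𝒰, Sum.inr ⁻¹' U = (V : Set B) := fun V => hV₂sub V.2
  choose F hF𝒰 hFpre using hF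
  choose G hG𝒰 hGpre using hG
  refine ⟨Set.range F ∪ Set.range G, ?_, ?_, ?_⟩
  · rintro V (⟨x, rfl⟩ | ⟨x, rfl⟩) <;> [exact hF𝒰 _; exact hG𝒰 _]
  · refine lt_of_le_of_lt (Cardinal.mk_union_le _ _) ?_
    exact Cardinal.add_lt_of_lt hκ.le
      (lt_of_le_of_lt Cardinal.mk_range_le hV₁card)
      (lt_of_le_of_lt Cardinal.mk_range_le hV₂card)
  · ext z
    simp only [Set.mem_sUnion, Set.mem_univ, iff_true]
    cases z with
    | inl a =>
      have : a ∈ ⋃₀ (V₁ : Set (Set A)) := hV₁cov ▸ Set.mem_univ _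
      obtain ⟨V, hV, haV⟩ := this
      refine ⟨F ⟨V, hV⟩, Or.inl ⟨⟨V, hV⟩, rfl⟩, ?_⟩
      have h' : a ∈ Sum.inl ⁻¹' F ⟨V, hV⟩ := by rw [hFpre ⟨V, hV⟩]; exact haV
      exact h'
    | inr b =>
      have : b ∈ ⋃₀ (V₂ : Set (Set B)) := hV₂cov ▸ Set.mem_univ _
      obtain ⟨V, hV, hbV⟩ := this
      refine ⟨G ⟨V, hV⟩, Or.inr ⟨⟨V, hV⟩, rfl⟩, ?_⟩
      have h' : b ∈ Sum.inr ⁻¹' G ⟨V, hV⟩ := by rw [hGpre ⟨V, hV⟩]; exact hbV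
      exact h'

theorem stmt_4 (κ : Cardinal.{u}) (hκ : Cardinal.aleph0 < κ)
    (X : Type u) [LinearOrder X] [DenselyOrdered X] [NoMinOrder X] [NoMaxOrder X]
    (D : Set X) (hDdense : ∀ x y : X, x < y → ∃ d ∈ D, x < d ∧ d < y)
    (hDsmall : Cardinal.mk D < κ) (hX : Cardinal.mk X = κ) :
    ∃ (Y : Type u) (ty : TopologicalSpace Y),
      tweight ty ≤ κ ∧ KCompact κ ty ∧
        ¬ KCompact κ (@instTopologicalSpaceProd Y Y ty ty) := by
  classical
  have hκ0 : Cardinal.aleph0 ≤ κ := hκ.le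
  have hXinf : Cardinal.aleph0 ≤ Cardinal.mk X := by rw [hX]; exact hκ0
  -- the dual order
  set Y := (X ⊕ Xᵒᵈ)
  set ty : TopologicalSpace Y := @instTopologicalSpaceSum X Xᵒᵈ (sorgT X) (sorgT Xᵒᵈ)
  letI := sorgT X
  letI := sorgT Xᵒᵈ
  letI : TopologicalSpace Y := ty
  -- dual density
  have hDdense' : ∀ x y : Xᵒᵈ, x < y →
      ∃ d : Xᵒᵈ, d ∈ (D : Set Xᵒᵈ) ∧ x < d ∧ d < y := by
    intro x y hxy
    obtain ⟨d, hd, h1, h2⟩ := hDdense (OrderDual.ofDual y) (OrderDual.ofDual x) hxy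
    exact ⟨OrderDual.toDual d, hd, h2, h1⟩
  -- weight
  have hbasis : @TopologicalSpace.IsTopologicalBasis Y ty
      ((fun u => Sum.inl '' u) '' sorgB X ∪ (fun u => Sum.inr '' u) '' sorgB Xᵒᵈ) :=
    (sorgB_isBasis (X := X)).sum (sorgB_isBasis (X := Xᵒᵈ))
  have hweight : tweight ty ≤ κ := by
    set Bs : Set (Set Y) :=
      (fun u => Sum.inl '' u) '' sorgB X ∪ (fun u => Sum.inr '' u) '' sorgB Xᵒᵈ with hBs
    have hmem : Cardinal.mk Bs ∈
        {c | ∃ B : Set (Set Y), @TopologicalSpace.IsTopologicalBasis Y ty B ∧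
          Cardinal.mk B = c} := ⟨Bs, hbasis, rfl⟩
    refine le_trans (csInf_le (OrderBot.bddBelow _) hmem) ?_
    have h1 : Cardinal.mk (sorgB X) ≤ κ := by
      refine le_trans Cardinal.mk_range_le ?_
      rw [Cardinal.mk_prod, Cardinal.lift_id, hX]
      exact (Cardinal.mul_eq_self hκ0).le
    have h2 : Cardinal.mk (sorgB Xᵒᵈ) ≤ κ := by
      refine le_trans Cardinal.mk_range_le ?_
      have hXd : Cardinal.mk Xᵒᵈ = κ := hX
      rw [Cardinal.mk_prod, Cardinal.lift_id, hXd]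
      exact (Cardinal.mul_eq_self hκ0).le
    calc Cardinal.mk Bs
        ≤ Cardinal.mk ((fun u => Sum.inl '' u) '' sorgB X)
          + Cardinal.mk ((fun u => Sum.inr '' u) '' sorgB Xᵒᵈ) :=
            Cardinal.mk_union_le _ _
      _ ≤ κ + κ := add_le_add (le_trans Cardinal.mk_image_le h1)
            (le_trans Cardinal.mk_image_le h2)
      _ = κ := Cardinal.add_eq_self hκ0
  -- κ-compactness
  have hcomp : KCompact κ ty :=
    kcompact_sum hκ
      (sorg_kcompact hκ D hDdense hDsmall)
      (sorg_kcompact hκ (X := Xᵒᵈ) D (fun x y h => hDdense' x y h) hDsmall)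
  -- the anti-diagonal
  set A : Set (Y × Y) :=
    Set.range fun x : X => ((Sum.inl x : Y), (Sum.inr (OrderDual.toDual x) : Y)) with hA
  set V : X → Set (Y × Y) := fun x =>
    (Sum.inl '' Set.Ici x) ×ˢ (Sum.inr '' Set.Ici (OrderDual.toDual x)) with hV
  have hVopen : ∀ x, IsOpen (V x) := fun x =>
    (isOpenMap_inl _ (sorg_isOpen_Ici x)).prod (isOpenMap_inr _ (sorg_isOpen_Ici _))
  have hVmem : ∀ x y : X,
      ((Sum.inl x : Y), (Sum.inr (OrderDual.toDual x) : Y)) ∈ V y → x = y := by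
    intro x y hxy
    obtain ⟨⟨x1, hx1, hx1e⟩, ⟨x2, hx2, hx2e⟩⟩ := hxy
    have e1 : x1 = x := Sum.inl_injective hx1e
    have e2 : x2 = OrderDual.toDual x := Sum.inr_injective hx2e
    subst e1; subst e2
    exact le_antisymm hx2 hx1
  have hAclosed : IsOpen Aᶜ := by
    rw [isOpen_prod_iff]
    rintro p q hpq
    cases p with
    | inr u =>
      refine ⟨Set.range Sum.inr, Set.univ, isOpen_range_inr, isOpen_univ,
        Set.mem_range_self u, Set.mem_univ q, ?_⟩
      rintro ⟨a, b⟩ ⟨⟨c, hc⟩, -⟩ ⟨x, hx⟩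
      rw [← hx] at hc
      exact Sum.inl_ne_inr (hc.symm : _)
    | inl u =>
      cases q with
      | inl v =>
        refine ⟨Set.univ, Set.range Sum.inl, isOpen_univ, isOpen_range_inl,
          Set.mem_univ _, Set.mem_range_self v, ?_⟩
        rintro ⟨a, b⟩ ⟨-, ⟨c, hc⟩⟩ ⟨x, hx⟩
        have : (Sum.inr (OrderDual.toDual x) : Y) = b := congrArg Prod.snd hx
        rw [← this] at hc
        exact Sum.inl_ne_inr hc
      | inr v =>
        have hne : u ≠ OrderDual.ofDual v := by
          rintro rfl
          exact hpq ⟨u, rfl⟩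
        rcases hne.lt_or_gt with h | h
        · -- u < ofDual v : pick d between
          obtain ⟨d, hd1, hd2⟩ := exists_between h
          refine ⟨Sum.inl '' Set.Ico u d,
            Sum.inr '' Set.Ico v (OrderDual.toDual d), ?_, ?_, ?_, ?_, ?_⟩
          · exact isOpenMap_inl _ ((sorgB_isBasis (X := X)).isOpen ⟨(u, d), rfl⟩)
          · exact isOpenMap_inr _
              ((sorgB_isBasis (X := Xᵒᵈ)).isOpen ⟨(v, OrderDual.toDual d), rfl⟩)
          · exact ⟨u, ⟨le_refl u, hd1⟩, rfl⟩
          · exact ⟨v, ⟨le_refl v, hd2⟩, rfl⟩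
          · rintro ⟨a, b⟩ ⟨⟨c, hc, hce⟩, ⟨e, he, hee⟩⟩ ⟨x, hx⟩
            have e1 : (Sum.inl x : Y) = a := congrArg Prod.fst hx
            have e2 : (Sum.inr (OrderDual.toDual x) : Y) = b := congrArg Prod.snd hx
            rw [← e1] at hce; rw [← e2] at hee
            have hc' : c = x := Sum.inl_injective hce
            have he' : e = OrderDual.toDual x := Sum.inr_injective hee
            have h1 : x < d := hc' ▸ hc.2
            have h2 : d < x := by
              have h2' := he.2
              rw [he'] at h2'
              exact h2'
            exact absurd h1 (not_lt_of_gt h2)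
        · -- ofDual v < u
          refine ⟨Sum.inl '' Set.Ici u, Sum.inr '' Set.Ici v, ?_, ?_, ?_, ?_, ?_⟩
          · exact isOpenMap_inl _ (sorg_isOpen_Ici u)
          · exact isOpenMap_inr _ (sorg_isOpen_Ici v)
          · exact ⟨u, le_refl u, rfl⟩
          · exact ⟨v, le_refl v, rfl⟩
          · rintro ⟨a, b⟩ ⟨⟨c, hc, hce⟩, ⟨e, he, hee⟩⟩ ⟨x, hx⟩
            have e1 : (Sum.inl x : Y) = a := congrArg Prod.fst hx
            have e2 : (Sum.inr (OrderDual.toDual x) : Y) = b := congrArg Prod.snd hx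
            rw [← e1] at hce; rw [← e2] at hee
            have hc' : c = x := Sum.inl_injective hce
            have he' : e = OrderDual.toDual x := Sum.inr_injective hee
            have h1 : u ≤ x := hc' ▸ hc
            have h2 : x ≤ OrderDual.ofDual v := by
              have h2' := he
              rw [he'] at h2'
              exact h2'
            exact absurd (lt_of_le_of_lt (le_trans h1 h2) h) (lt_irrefl _)
  -- the product is not κ-compact
  have hnc : ¬ KCompact κ (@instTopologicalSpaceProd Y Y ty ty) := by
    intro h
    obtain ⟨𝒰₀, hsub, hcard, hcov⟩ := h (insert Aᶜ (Set.range V))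
      (by rintro U (rfl | ⟨x, rfl⟩); exacts [hAclosed, hVopen x])
      (by
        ext z
        simp only [Set.mem_sUnion, Set.mem_univ, iff_true]
        by_cases hz : z ∈ A
        · obtain ⟨x, rfl⟩ := hz
          exact ⟨V x, Or.inr ⟨x, rfl⟩,
            ⟨x, le_refl x, rfl⟩, ⟨OrderDual.toDual x, le_refl _, rfl⟩⟩
        · exact ⟨Aᶜ, Or.inl rfl, hz⟩)
    have hS : ∀ x : X, ∃ S ∈ 𝒰₀,
        ((Sum.inl x : Y), (Sum.inr (OrderDual.toDual x) : Y)) ∈ S := by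
      intro x
      have : ((Sum.inl x : Y), (Sum.inr (OrderDual.toDual x) : Y)) ∈ ⋃₀ 𝒰₀ :=
        hcov ▸ Set.mem_univ _
      exact this
    choose S hS𝒰 hSmem using hS
    have hSV : ∀ x, S x = V x := by
      intro x
      rcases Set.mem_insert_iff.mp (hsub (hS𝒰 x)) with hEq | ⟨y, hy⟩
      · exfalso
        have hm := hSmem x
        rw [hEq] at hm
        exact hm ⟨x, rfl⟩
      · have hx := hSmem x
        rw [← hy] at hx
        rw [← hy, hVmem x y hx]
    have hinj : Function.Injective fun x : X => (⟨S x, hS𝒰 x⟩ : 𝒰₀) := by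
      intro x y hxy
      have hSxy : S x = S y := congrArg Subtype.val hxy
      have hx := hSmem x
      rw [hSxy, hSV y] at hx
      exact hVmem x y hx
    have : Cardinal.mk X ≤ Cardinal.mk 𝒰₀ := Cardinal.mk_le_of_injective hinj
    rw [hX] at this
    exact absurd (lt_of_le_of_lt this hcard) (lt_irrefl κ)
  exact ⟨Y, ty, hweight, hcomp, hnc⟩
end

section
/- Let κ ≥ ω₁. Suppose there exist infinite cardinals μ and θ with μ^{<θ} = μ < κ ≤ μ^θ. Then there is a dense linear order without endpoints X with a dense subset of size less than κ and |X| = κ. -/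
/-!
Order the functions `θ → μ` (with `θ`, `μ` seen as initial ordinals) lexicographically. The
eventually-zero functions are order-dense in this order, and there are at most
`θ · μ^{<θ} = μ < κ` of them, while there are `μ^θ ≥ κ` functions in total. So any `κ` functions
together with the eventually-zero ones, minus the least function `0`, form a dense linear order
without endpoints of size `κ` with a dense subset of size `< κ`.
-/

open Cardinal Set
open scoped Ordinal

universe u

theorem Cardinal.le_powerlt_self {a : Cardinal.{u}} (ha : 1 < a) (b : Cardinal.{u}) :
    b ≤ a ^< b := by
  by_contra! h
  exact (cantor' _ ha).not_ge (le_powerlt a h)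

theorem Cardinal.le_mk_sdiff {α : Type u} {S T : Set α} {κ : Cardinal.{u}} (hκ : ℵ₀ ≤ κ)
    (hS : κ ≤ #S) (hT : #T < κ) : κ ≤ #(S \ T : Set α) := by
  by_contra! h
  exact (hS.trans (le_mk_sdiff_add_mk S T)).not_gt (add_lt_of_lt hκ h hT)

section OrderDense

variable {Y : Type u} [LinearOrder Y] [OrderBot Y] {D X : Set Y}

theorem exists_mem_inter_between (hD : ∀ x y : Y, x < y → ∃ d ∈ D, x < d ∧ d < y)
    (hDX : D \ {⊥} ⊆ X) {x y : Y} (hxy : x < y) : ∃ d ∈ X ∩ D, x < d ∧ d < y := by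
  obtain ⟨d, hdD, hxd, hdy⟩ := hD x y hxy
  exact ⟨d, ⟨hDX ⟨hdD, (bot_le.trans_lt hxd).ne'⟩, hdD⟩, hxd, hdy⟩

-- The witness is `(S ∪ D) \ {⊥}` for any `S ⊆ Y` of size `κ`.
theorem exists_denselyOrdered_of_dense [hY : NoMaxOrder Y]
    (hD : ∀ x y : Y, x < y → ∃ d ∈ D, x < d ∧ d < y) {κ : Cardinal.{u}} (hκ : ℵ₀ ≤ κ)
    (hDκ : #D < κ) (hκY : κ ≤ #Y) :
    ∃ (X : Type u) (_ : LinearOrder X),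
      DenselyOrdered X ∧ NoMinOrder X ∧ NoMaxOrder X ∧
      (∃ D : Set X, (∀ x y : X, x < y → ∃ d ∈ D, x < d ∧ d < y) ∧ #D < κ) ∧ #X = κ := by
  obtain ⟨S, hS⟩ := le_mk_iff_exists_set.1 hκY
  set X : Set Y := (S ∪ D) \ {⊥}
  have hDX : D \ {⊥} ⊆ X := sdiff_subset_sdiff_left subset_union_right
  have between {x y : X} (hxy : x < y) : ∃ d : X, ↑d ∈ D ∧ x < d ∧ d < y := by
    obtain ⟨d, ⟨hdX, hdD⟩, hxd, hdy⟩ := exists_mem_inter_between hD hDX hxy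
    exact ⟨⟨d, hdX⟩, hdD, hxd, hdy⟩
  refine ⟨X, inferInstance, ⟨fun x y hxy => ?_⟩, ⟨fun x => ?_⟩, ⟨fun x => ?_⟩,
    ⟨{x : X | ↑x ∈ D}, fun x y hxy => by simpa using between hxy, ?_⟩, ?_⟩
  · obtain ⟨d, -, hd⟩ := between hxy
    exact ⟨d, hd⟩
  · have hx : ⊥ < (x : Y) := bot_lt_iff_ne_bot.2 x.2.2
    obtain ⟨d, ⟨hdX, -⟩, -, hdx⟩ := exists_mem_inter_between hD hDX hx
    exact ⟨⟨d, hdX⟩, hdx⟩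
  · obtain ⟨y, hxy⟩ := exists_gt (x : Y)
    obtain ⟨d, ⟨hdX, -⟩, hxd, -⟩ := exists_mem_inter_between hD hDX hxy
    exact ⟨⟨d, hdX⟩, hxd⟩
  · calc #{x : X | ↑x ∈ D} ≤ #D := mk_le_of_injective (f := fun x => ⟨x.1.1, x.2⟩)
          fun x y h => Subtype.ext (Subtype.ext (congrArg Subtype.val h :))
      _ < κ := hDκ
  · refine le_antisymm ?_ ?_
    · calc #X ≤ #(S ∪ D : Set Y) := mk_le_mk_of_subset sdiff_subset
        _ ≤ #S + #D := mk_union_le S D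
        _ = κ := by rw [hS, add_eq_left hκ hDκ.le]
    · calc κ ≤ #(S \ {⊥} : Set Y) :=
          le_mk_sdiff hκ hS.ge (by simpa using one_lt_aleph0.trans_le hκ)
        _ ≤ #X := mk_le_mk_of_subset (sdiff_subset_sdiff_left subset_union_left)

end OrderDense

namespace Pi.Lex

variable (ι A : Type u) [LinearOrder ι] [LinearOrder A] [OrderBot A]

def eventuallyBot : Set (Lex (ι → A)) := {f | ∃ b, ∀ j, b ≤ j → ofLex f j = ⊥}

variable {ι A}

theorem exists_mem_eventuallyBot_between [SuccOrder ι] [NoMaxOrder ι] [NoMaxOrder A]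
    {f g : Lex (ι → A)} (hfg : f < g) : ∃ d ∈ eventuallyBot ι A, f < d ∧ d < g := by
  classical
  obtain ⟨i, hfg_eq, hfg_lt⟩ := hfg
  obtain ⟨a, ha⟩ := exists_gt (ofLex f (Order.succ i))
  have hi : i < Order.succ i := Order.lt_succ i
  refine ⟨toLex fun j => if j ≤ i then ofLex f j else if j = Order.succ i then a else ⊥,
    ⟨Order.succ (Order.succ i), fun j hj => ?_⟩, ⟨Order.succ i, fun j hj => ?_, ?_⟩,
    ⟨i, fun j hj => ?_, ?_⟩⟩
  · have hj' : Order.succ i < j := (Order.lt_succ _).trans_le hj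
    simp [(hi.trans hj').not_ge, hj'.ne']
  · simp [Order.lt_succ_iff.1 hj]
  · simpa [hi.not_ge] using ha
  · simpa [hj.le] using hfg_eq j hj
  · simpa using hfg_lt

theorem mk_eventuallyBot_le [WellFoundedLT ι] (hι : (#ι).ord = typeLT ι) :
    #(eventuallyBot ι A) ≤ #ι * #A ^< #ι := by
  classical
  let extend : (Σ b : ι, Iio b → A) → Lex (ι → A) := fun g =>
    toLex fun j => if h : j < g.1 then g.2 ⟨j, h⟩ else ⊥
  have hsub : eventuallyBot ι A ⊆ range extend := by
    rintro f ⟨b, hb⟩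
    refine ⟨⟨b, fun j => ofLex f j⟩, funext fun j => ?_⟩
    by_cases hj : j < b
    · simp [extend, hj]
    · simpa [extend, hj] using (hb j (not_lt.1 hj)).symm
  calc #(eventuallyBot ι A) ≤ #(Σ b : ι, Iio b → A) :=
        (mk_le_mk_of_subset hsub).trans mk_range_le
    _ = sum fun b : ι => #A ^ #(Iio b) := by simp only [mk_sigma, power_def]
    _ ≤ #ι * ⨆ b : ι, #A ^ #(Iio b) := sum_le_mk_mul_iSup _
    _ ≤ #ι * #A ^< #ι := by
      gcongr
      exact ciSup_le' fun b => le_powerlt _ (mk_Iio_lt b hι)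

theorem exists_denselyOrdered_of_le_mk_pi [WellFoundedLT ι] [SuccOrder ι] [NoMaxOrder ι]
    [Nonempty ι] [NoMaxOrder A] {κ : Cardinal.{u}} (hκ : ℵ₀ ≤ κ)
    (hD : #(eventuallyBot ι A) < κ) (hκA : κ ≤ #A ^ #ι) :
    ∃ (X : Type u) (_ : LinearOrder X),
      DenselyOrdered X ∧ NoMinOrder X ∧ NoMaxOrder X ∧
      (∃ D : Set X, (∀ x y : X, x < y → ∃ d ∈ D, x < d ∧ d < y) ∧ #D < κ) ∧ #X = κ :=
  -- The `NoMaxOrder` instance on `Lex (ι → A)` is found only for the `<` of `Pi.Lex`,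
  -- not syntactically for the one coming from `Pi.Lex.linearOrder`.
  exists_denselyOrdered_of_dense (hY := inferInstanceAs (NoMaxOrder (Lex (ι → A))))
    (fun _ _ => exists_mem_eventuallyBot_between) hκ hD (by rwa [power_def] at hκA)

end Pi.Lex

theorem stmt_5_general (κ μ θ : Cardinal.{u})
    (hμ : Cardinal.aleph0 ≤ μ) (hθ : Cardinal.aleph0 ≤ θ)
    (h1 : μ ^< θ = μ) (h2 : μ < κ) (h3 : κ ≤ μ ^ θ) :
    ∃ (X : Type u) (_ : LinearOrder X),
      DenselyOrdered X ∧ NoMinOrder X ∧ NoMaxOrder X ∧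
      (∃ D : Set X, (∀ x y : X, x < y → ∃ d ∈ D, x < d ∧ d < y) ∧ Cardinal.mk D < κ) ∧
      Cardinal.mk X = κ := by
  have : Nonempty μ.ord.ToType :=
    Ordinal.nonempty_toType_iff.2 (by simpa using (aleph0_pos.trans_le hμ).ne')
  have : Nonempty θ.ord.ToType :=
    Ordinal.nonempty_toType_iff.2 (by simpa using (aleph0_pos.trans_le hθ).ne')
  let := WellFoundedLT.toOrderBot μ.ord.ToType
  have := Cardinal.noMaxOrder hμ
  have := Cardinal.noMaxOrder hθ
  have hθμ : θ ≤ μ := h1 ▸ le_powerlt_self (one_lt_aleph0.trans_le hμ) θ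
  have hD := Pi.Lex.mk_eventuallyBot_le (ι := θ.ord.ToType) (A := μ.ord.ToType) (by simp)
  simp only [mk_toType, card_ord, h1] at hD
  refine Pi.Lex.exists_denselyOrdered_of_le_mk_pi (ι := θ.ord.ToType) (A := μ.ord.ToType)
    (hμ.trans h2.le) ?_ (by simpa using h3)
  calc _ ≤ θ * μ := hD
    _ ≤ μ * μ := by gcongr
    _ = μ := mul_eq_self hμ
    _ < κ := h2

theorem stmt_5 (κ μ θ : Cardinal.{u})
    (hκ : Cardinal.aleph 1 ≤ κ) (hμ : Cardinal.aleph0 ≤ μ) (hθ : Cardinal.aleph0 ≤ θ)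
    (h1 : μ ^< θ = μ) (h2 : μ < κ) (h3 : κ ≤ μ ^ θ) :
    ∃ (X : Type u) (_ : LinearOrder X),
      DenselyOrdered X ∧ NoMinOrder X ∧ NoMaxOrder X ∧
      (∃ D : Set X, (∀ x y : X, x < y → ∃ d ∈ D, x < d ∧ d < y) ∧ Cardinal.mk D < κ) ∧
      Cardinal.mk X = κ :=
  stmt_5_general κ μ θ hμ hθ h1 h2 h3
end

section
/- Let κ be a regular uncountable cardinal which is not a strong limit. Let θ be the least cardinal ν such that there exists λ with ν ≤ λ < κ ≤ λ^ν. Then θ is a regular cardinal. -/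
/-!
Write `S` for the set of `ν` admitting some `λ` with `ν ≤ λ < κ ≤ λ ^ ν`; it is nonempty because `κ`
is not a strong limit, and `θ = min S` is infinite since finite powers of cardinals below `κ` stay
below `κ`. If `θ` were singular, write `θ` as a sum of `cof θ` cardinals `θᵢ < θ`. By minimality of
`θ` each `λ ^ θᵢ` is below `κ`, and by regularity of `κ` so is `σ = sup λ ^ θᵢ`. Then
`κ ≤ λ ^ θ = ∏ λ ^ θᵢ ≤ σ ^ cof θ`, so `cof θ ∈ S` (witnessed by `max σ (cof θ)`), contradicting
`cof θ < θ`.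
-/

open Cardinal Ordinal

universe u

namespace Cardinal

theorem exists_lt_le_power_self_of_not_isStrongLimit {κ : Cardinal} (hκ : ℵ₀ ≤ κ)
    (hκl : ¬ κ.IsStrongLimit) : ∃ l < κ, κ ≤ l ^ l := by
  have hκ' : ℵ₀ < κ := hκ.lt_of_ne fun h => hκl (h ▸ isStrongLimit_aleph0)
  obtain ⟨x, hxκ, hx⟩ := not_isStrongPrelimit_iff.1 fun h => hκl ⟨(aleph0_pos.trans hκ').ne', h⟩
  refine ⟨max x ℵ₀, max_lt hxκ hκ', ?_⟩
  calc κ ≤ 2 ^ x := hx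
    _ ≤ 2 ^ max x ℵ₀ := power_le_power_left two_ne_zero (le_max_left _ _)
    _ ≤ max x ℵ₀ ^ max x ℵ₀ :=
      power_le_power_right ((natCast_lt_aleph0 (n := 2)).le.trans (le_max_right _ _))

theorem power_lt_of_lt_of_lt_aleph0 {κ l ν : Cardinal} (hκ : ℵ₀ ≤ κ) (hl : l < κ)
    (hν : ν < ℵ₀) : l ^ ν < κ := by
  rcases le_or_gt ℵ₀ l with hl' | hl'
  · exact (pow_le hl' hν).trans_lt hl
  · exact (power_lt_aleph0 hl' hν).trans_le hκ

theorem exists_le_sum_of_lt_of_card_eq_cof {c : Cardinal.{u}} (hc : ℵ₀ ≤ c) :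
    ∃ (ι : Type u) (g : ι → Cardinal.{u}), #ι = c.ord.cof ∧ (∀ i, g i < c) ∧ c ≤ sum g := by
  induction c using Cardinal.inductionOn with | mk α
  obtain ⟨_, _, hα⟩ := exists_ord_eq_type_lt α
  have : NoMaxOrder α := by
    rw [← isSuccPrelimit_type_lt_iff, ← hα]
    exact (isSuccLimit_ord hc).isSuccPrelimit
  obtain ⟨s, hs, hs'⟩ := Order.exists_cof_eq α
  refine ⟨s, fun i => #(Set.Iio i.1), by rw [hs', hα, cof_type], fun i => mk_Iio_lt i.1 hα, ?_⟩
  refine mk_iUnion_le_sum_mk.trans' ?_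
  rw [← mk_univ, ← isCofinal_iff_iUnion_Iio_eq_univ.1 hs, Set.iUnion_coe_set]

theorem exists_lt_le_power_cof_of_forall_power_lt {κ θ l : Cardinal.{u}} (hκ : κ.IsRegular)
    (hθ : ℵ₀ ≤ θ) (hcof : θ.ord.cof < κ) (hl : ∀ ν < θ, l ^ ν < κ) :
    ∃ σ < κ, l ^ θ ≤ σ ^ θ.ord.cof := by
  obtain ⟨ι, g, hι, hgθ, hθg⟩ := exists_le_sum_of_lt_of_card_eq_cof hθ
  refine ⟨⨆ i, l ^ g i, iSup_lt_of_lt_cof_ord (by rwa [hκ.cof_ord, hι]) fun i => hl _ (hgθ i), ?_⟩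
  rcases eq_or_ne l 0 with rfl | hl0
  · rw [zero_power (aleph0_pos.trans_le hθ).ne']
    exact zero_le
  calc l ^ θ ≤ l ^ sum g := power_le_power_left hl0 hθg
    _ = prod fun i => l ^ g i := power_sum l g
    _ ≤ prod fun _ : ι => ⨆ i, l ^ g i :=
      prod_le_prod _ _ fun i => le_ciSup bddAbove_of_small i
    _ = (⨆ i, l ^ g i) ^ θ.ord.cof := by rw [prod_const', hι]

end Cardinal

theorem stmt_7_general (κ θ : Cardinal)
    (hreg : κ.IsRegular) (hnsl : ¬ κ.IsStrongLimit)
    (hθ : θ = sInf {ν : Cardinal | ∃ l : Cardinal, ν ≤ l ∧ l < κ ∧ κ ≤ l ^ ν}) :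
    θ.IsRegular := by
  set S := {ν : Cardinal | ∃ l : Cardinal, ν ≤ l ∧ l < κ ∧ κ ≤ l ^ ν}
  have hmin : ∀ ν ∈ S, θ ≤ ν := fun ν hν => hθ ▸ csInf_le' hν
  obtain ⟨l, hθl, hlκ, hκl⟩ : θ ∈ S := by
    obtain ⟨l, hlκ, hκl⟩ := exists_lt_le_power_self_of_not_isStrongLimit hreg.aleph0_le hnsl
    exact hθ ▸ csInf_mem ⟨l, l, le_rfl, hlκ, hκl⟩
  have hθinf : ℵ₀ ≤ θ := not_lt.1 fun h =>
    (power_lt_of_lt_of_lt_aleph0 hreg.aleph0_le hlκ h).not_ge hκl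
  have hl : ∀ ν < θ, l ^ ν < κ := fun ν hν =>
    lt_of_not_ge fun h => (hmin ν ⟨l, hν.le.trans hθl, hlκ, h⟩).not_gt hν
  refine ⟨hθinf, not_lt.1 fun hcof => ?_⟩
  have hcofκ : θ.ord.cof < κ := hcof.trans (hθl.trans_lt hlκ)
  obtain ⟨σ, hσκ, hσ⟩ := exists_lt_le_power_cof_of_forall_power_lt hreg hθinf hcofκ hl
  refine (hmin _ ⟨max σ _, le_max_right _ _, max_lt hσκ hcofκ, ?_⟩).not_gt hcof
  exact hκl.trans (hσ.trans (power_le_power_right (le_max_left _ _)))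

theorem stmt_7 (κ θ : Cardinal)
    (hreg : κ.IsRegular) (hunc : Cardinal.aleph0 < κ) (hnsl : ¬ κ.IsStrongLimit)
    (hθ : θ = sInf {ν : Cardinal | ∃ l : Cardinal, ν ≤ l ∧ l < κ ∧ κ ≤ l ^ ν}) :
    θ.IsRegular :=
  stmt_7_general κ θ hreg hnsl hθ
end

section
/- Let κ be regular uncountable and not a strong limit. Let θ be the least ν such that some λ satisfies ν ≤ λ < κ ≤ λ^ν, let λ be the least such witness for θ, and put μ = λ^{<θ}. Then μ^{<θ} = μ, μ < κ, and μ^θ ≥ κ. -/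
/-!
Minimality of θ gives `l ^ α < κ` for `α < θ`, so `μ = l ^< θ < κ` by regularity of `κ`, while
`κ ≤ l ^ θ ≤ μ ^ θ`. The cardinal `θ` is regular: a singular `θ` is a sum of `cf θ` smaller
cardinals, so `κ ≤ l ^ θ ≤ μ ^ cf θ` and `(cf θ, μ)` would be a smaller witness. Finally, for
`α < θ`, either `μ ≤ l ^ β` for some `β < θ`, and then `μ ^ α ≤ l ^ (β * α) ≤ μ`; or
`β ↦ l ^ β` is not eventually constant below the regular `θ`, so `α < θ ≤ cf μ`, every map
`α → μ` is bounded, and `μ ^ α ≤ Σ_{d < μ} d ^ α ≤ μ`.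
-/

open Cardinal Set

namespace Cardinal

universe u

theorem self_le_powerlt (a : Cardinal.{u}) {b : Cardinal.{u}} (hb : 1 < b) : a ≤ a ^< b := by
  simpa using le_powerlt a hb

theorem exists_lt_power_of_lt_powerlt {a b d : Cardinal.{u}} (hd : d < a ^< b) :
    ∃ x < b, d < a ^ x := by
  simpa using mt powerlt_le.2 hd.not_ge

theorem power_power_le_powerlt (a : Cardinal.{u}) {b x y : Cardinal.{u}} (hb : ℵ₀ ≤ b)
    (hx : x < b) (hy : y < b) : (a ^ x) ^ y ≤ a ^< b :=
  power_mul.symm.trans_le (le_powerlt a (mul_lt_of_lt hb hx hy))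

theorem aleph0_le_of_lt_of_le_power {a b c : Cardinal.{u}} (hc : ℵ₀ < c) (ha : a < c)
    (h : c ≤ a ^ b) : ℵ₀ ≤ b := by
  by_contra! hb
  obtain ⟨n, rfl⟩ := lt_aleph0.1 hb
  exact (h.trans power_nat_le_max).not_gt (max_lt ha hc)

theorem exists_family_lt_le_sum {c : Cardinal.{u}} (hc : ℵ₀ ≤ c) :
    ∃ (ι : Type u) (f : ι → Cardinal.{u}), #ι = c.ord.cof ∧ (∀ i, f i < c) ∧ c ≤ sum f := by
  obtain ⟨s, hs, hcard⟩ := Order.exists_cof_eq c.ord.ToType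
  refine ⟨s, fun x => #(Iic x.1), by rw [hcard, Ordinal.cof_toType], fun x => ?_, ?_⟩
  · simpa using mk_Iic_lt x.1 (by simp) (by simpa using hc)
  · have hcover : (⋃ x : s, Iic x.1) = Set.univ := eq_univ_of_forall fun y => by
      obtain ⟨z, hz, hyz⟩ := hs y
      exact mem_iUnion.2 ⟨⟨z, hz⟩, hyz⟩
    calc c = #(⋃ x : s, Iic x.1) := by rw [hcover, mk_univ, mk_ord_toType]
      _ ≤ sum fun x : s => #(Iic x.1) := mk_iUnion_le_sum_mk

theorem power_le_of_lt_cof_ord {a b : Cardinal.{u}} (ha : ℵ₀ ≤ a) (hb : b < a.ord.cof)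
    (h : ∀ d < a, d ^ b ≤ a) : a ^ b ≤ a := by
  let M := a.ord.ToType
  have bounded (f : b.out → M) : ∃ x : M, ∀ i, f i < x := by
    have hf : ¬ IsCofinal (range f) := fun hf =>
      ((Ordinal.cof_toType a.ord ▸ Order.cof_le hf).trans mk_range_le).not_gt (by rwa [mk_out])
    simpa [IsCofinal] using hf
  choose bound hbound using bounded
  calc a ^ b = #(b.out → M) := by rw [← power_def, mk_out, mk_ord_toType]
    _ ≤ #(Σ x : M, b.out → Iio x) :=
        mk_le_of_injective (f := fun f => ⟨bound f, fun i => ⟨f i, hbound f i⟩⟩)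
          fun f g hfg => funext fun i =>
            congrArg (fun p : Σ x : M, b.out → Iio x => ((p.2 i : Iio p.1) : M)) hfg
    _ = sum fun x : M => #(Iio x) ^ b := by simp [mk_sigma]
    _ ≤ sum fun _ : M => a :=
        sum_le_sum _ _ fun x => h _ (by simpa [M] using mk_Iio_lt x (by simp [M]))
    _ = a := by rw [sum_const', mk_ord_toType, mul_eq_self ha]

theorem power_le_powerlt_power_cof_ord {a b : Cardinal.{u}} (ha : a ≠ 0) (hb : ℵ₀ ≤ b) :
    a ^ b ≤ (a ^< b) ^ b.ord.cof := by
  obtain ⟨ι, f, hι, hf, hsum⟩ := exists_family_lt_le_sum hb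
  calc a ^ b ≤ a ^ sum f := power_le_power_left ha hsum
    _ = prod fun i => a ^ f i := power_sum a f
    _ ≤ prod fun _ : ι => a ^< b := prod_le_prod _ _ fun i => le_powerlt a (hf i)
    _ = (a ^< b) ^ b.ord.cof := by rw [prod_const', hι]

theorem powerlt_lt_of_lt_cof_ord {a b c : Cardinal.{u}} (hb : b < c.ord.cof)
    (h : ∀ x < b, a ^ x < c) : a ^< b < c := by
  have hIio : #(Iio b) ≤ lift.{u + 1} b := by
    have := mk_le_of_injective (f := fun x : Iio b => (⟨x.1.ord, ord_lt_ord.2 x.2⟩ : Iio b.ord))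
      fun x y hxy => Subtype.ext (ord_injective (congrArg Subtype.val hxy))
    rwa [mk_Iio_ordinal, card_ord] at this
  refine lift_iSup_lt_of_lt_cof_ord ?_ fun x : Iio b => h x x.2
  rw [lift_id'.{u, u+1}, ← lift_ord, ← Ordinal.lift_cof]
  exact hIio.trans_lt (lift_lt.2 hb)

theorem le_cof_ord_powerlt {a b : Cardinal.{u}} (ha : ℵ₀ ≤ a) (hb : b.IsRegular)
    (h : ∀ x < b, a ^ x < a ^< b) : b ≤ (a ^< b).ord.cof := by
  have hinf : ℵ₀ ≤ a ^< b := ha.trans (self_le_powerlt a (one_lt_aleph0.trans_le hb.aleph0_le))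
  by_contra! hcof
  obtain ⟨ι, f, hι, hf, hsum⟩ := exists_family_lt_le_sum hinf
  choose x hxb hfx using fun i => exists_lt_power_of_lt_powerlt (hf i)
  have hιb : #ι < b := hι ▸ hcof
  have hsup : (⨆ i, x i) < b := iSup_lt_of_lt_cof_ord (by rwa [hb.cof_ord]) hxb
  have hfsup : (⨆ i, f i) < a ^< b := by
    refine lt_of_le_of_lt (ciSup_le' fun i => (hfx i).le.trans ?_) (h _ hsup)
    exact power_le_power_left (aleph0_pos.trans_le ha).ne' (le_ciSup bddAbove_of_small i)
  have hιlt : #ι < a ^< b := (cantor' #ι (one_lt_aleph0.trans_le ha)).trans (h _ hιb)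
  exact (hsum.trans (sum_le_mk_mul_iSup f)).not_gt (mul_lt_of_lt hinf hιlt hfsup)

theorem powerlt_powerlt_of_isRegular {a b : Cardinal.{u}} (ha : ℵ₀ ≤ a) (hb : b.IsRegular) :
    (a ^< b) ^< b = a ^< b := by
  have h1b : 1 < b := one_lt_aleph0.trans_le hb.aleph0_le
  refine le_antisymm (powerlt_le.2 fun y hy => ?_) (self_le_powerlt _ h1b)
  by_cases hconst : ∃ x < b, a ^< b ≤ a ^ x
  · obtain ⟨x, hx, hle⟩ := hconst
    exact (power_le_power_right hle).trans (power_power_le_powerlt a hb.aleph0_le hx hy)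
  · push Not at hconst
    refine power_le_of_lt_cof_ord (ha.trans (self_le_powerlt a h1b))
      (hy.trans_le (le_cof_ord_powerlt ha hb hconst)) fun d hd => ?_
    obtain ⟨x, hx, hdx⟩ := exists_lt_power_of_lt_powerlt hd
    exact (power_le_power_right hdx.le).trans (power_power_le_powerlt a hb.aleph0_le hx hy)

end Cardinal

theorem stmt_8 (κ θ l μ : Cardinal)
    (hreg : κ.IsRegular) (hunc : Cardinal.aleph0 < κ) (hnsl : ¬ κ.IsStrongLimit)
    (hθ : θ = sInf {ν : Cardinal | ∃ l' : Cardinal, ν ≤ l' ∧ l' < κ ∧ κ ≤ l' ^ ν})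
    (hl : l = sInf {l' : Cardinal | θ ≤ l' ∧ l' < κ ∧ κ ≤ l' ^ θ})
    (hμ : μ = l ^< θ) :
    μ ^< θ = μ ∧ μ < κ ∧ κ ≤ μ ^ θ := by
  obtain ⟨x, hxκ, hκx⟩ : ∃ x < κ, κ ≤ 2 ^ x :=
    not_isStrongPrelimit_iff.1 fun h => hnsl ⟨hreg.ne_zero, h⟩
  have hθmem : θ ∈ {ν : Cardinal | ∃ l' : Cardinal, ν ≤ l' ∧ l' < κ ∧ κ ≤ l' ^ ν} :=
    hθ ▸ csInf_mem ⟨x, max x 2, le_max_left _ _, max_lt hxκ (ofNat_lt_aleph0.trans hunc),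
      hκx.trans (power_le_power_right (le_max_right _ _))⟩
  have hθmin {ν l' : Cardinal} (hν : ν ≤ l') (hl' : l' < κ) (hκ : κ ≤ l' ^ ν) : θ ≤ ν :=
    hθ ▸ csInf_le' ⟨l', hν, hl', hκ⟩
  obtain ⟨hθl, hlκ, hκl⟩ : θ ≤ l ∧ l < κ ∧ κ ≤ l ^ θ := hl ▸ csInf_mem hθmem
  have hθinf : ℵ₀ ≤ θ := aleph0_le_of_lt_of_le_power hunc hlκ hκl
  have hlinf : ℵ₀ ≤ l := hθinf.trans hθl
  have hlμ : l ≤ μ := hμ ▸ self_le_powerlt l (one_lt_aleph0.trans_le hθinf)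
  have hθκ : θ < κ.ord.cof := (hθl.trans_lt hlκ).trans_eq hreg.cof_ord.symm
  have hμκ : μ < κ := hμ ▸ powerlt_lt_of_lt_cof_ord hθκ
    fun α hα => lt_of_not_ge fun h => (hθmin (hα.le.trans hθl) hlκ h).not_gt hα
  have hθreg : θ.IsRegular := by
    refine ⟨hθinf, le_of_not_gt fun hcof => (hθmin ?_ hμκ ?_).not_gt hcof⟩
    · exact hcof.le.trans (hθl.trans hlμ)
    · exact hκl.trans (hμ ▸ power_le_powerlt_power_cof_ord (aleph0_pos.trans_le hlinf).ne' hθinf)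
  exact ⟨hμ ▸ powerlt_powerlt_of_isRegular hlinf hθreg, hμκ,
    hκl.trans (power_le_power_right hlμ)⟩
end

section
/- Let κ be a strongly compact cardinal and X a topological space with a subbase 𝒮 such that every cover of X by members of 𝒮 has a subcover of size less than κ. Then X is κ-compact. -/
universe u

/-- A filter is `κ`-complete if it is closed under intersections of fewer than `κ` members. -/
def IsKComplete (κ : Cardinal.{u}) {α : Type u} (F : Filter α) : Prop :=
  ∀ S : Set (Set α), Cardinal.mk S < κ → (∀ s ∈ S, s ∈ F) → ⋂₀ S ∈ F

/-- `κ` is strongly compact: every `κ`-complete proper filter extends to a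
`κ`-complete ultrafilter. -/
def IsStronglyCompactCard (κ : Cardinal.{u}) : Prop :=
  ∀ (α : Type u) (F : Filter α), F.NeBot → IsKComplete κ F →
    ∃ U : Ultrafilter α, IsKComplete κ (U : Filter α) ∧ F ≤ (U : Filter α)

/-!
Let `𝒰` be an open cover with no subcover of size `< κ`. Since `κ` is regular, the complements of
the members of `𝒰` generate a proper `κ`-complete filter; let `U` be a `κ`-complete ultrafilter
refining it. If `U` had no limit, the subbasic sets outside `U` would cover `X`, and the
complements of fewer than `κ` of them would meet in `U`, yet be empty. So `U` converges to some
`x ∈ V ∈ 𝒰`, and contains both `V` and `Vᶜ`.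

`κ` is regular by Ulam's theorem: for singular `κ`, `κ`-completeness implies
`succ κ`-completeness, so a `κ`-complete ultrafilter refining the co-`≤ κ` filter on `succ κ`
would be a uniform `succ κ`-complete ultrafilter on `succ κ`.
-/

open Cardinal Set Filter Order TopologicalSpace Topology

theorem isKComplete_iff_cardinalInterFilter {κ : Cardinal.{u}} {α : Type u} {F : Filter α} :
    IsKComplete κ F ↔ CardinalInterFilter F κ :=
  ⟨fun h => ⟨h⟩, fun h => h.cardinal_sInter_mem⟩

theorem Cardinal.mk_Iic_toType_ord_lt {c : Cardinal.{u}} (hc : ℵ₀ ≤ c) (x : c.ord.ToType) :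
    #(Iic x) < c := by
  rw [← Iio_insert]
  exact mk_insert_le.trans_lt <|
    add_lt_of_lt hc (by simpa using mk_Iio_lt x) (one_lt_aleph0.trans_le hc)

theorem Ultrafilter.exists_mem_of_iUnion_mem {α ι : Type u} {c : Cardinal.{u}}
    (U : Ultrafilter α) [CardinalInterFilter (U : Filter α) c] {s : ι → Set α} (hι : #ι < c)
    (h : ⋃ i, s i ∈ U) : ∃ i, s i ∈ U := by
  by_contra! hs
  have hcompl : (⋃ i, s i)ᶜ ∈ U := by
    rw [compl_iUnion]
    exact (cardinal_iInter_mem hι).2 fun i => U.compl_mem_iff_notMem.2 (hs i)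
  exact U.compl_mem_iff_notMem.1 hcompl h

/-- Enumerate a family of `c` sets by `c`; along a cofinal subset of `c` of size `cof c < c`, it
is the union of its initial pieces, each of size `< c`. -/
theorem CardinalInterFilter.succ_of_isSingular {α : Type u} {c : Cardinal.{u}}
    (hc : c.IsSingular) (l : Filter α) [CardinalInterFilter l c] :
    CardinalInterFilter l (succ c) := by
  refine ⟨fun S hS hSl => ?_⟩
  obtain ⟨e⟩ : Nonempty (S ↪ c.ord.ToType) := by
    rw [← Cardinal.le_def, mk_ord_toType]
    exact lt_succ_iff.1 hS
  obtain ⟨C, hC, hCcard⟩ := exists_cof_eq c.ord.ToType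
  have hpiece : ∀ x, ⋂ s : e ⁻¹' Iic x, (s : Set α) ∈ l := fun x =>
    (cardinal_iInter_mem (c := c) ((mk_preimage_of_injective _ _ e.injective).trans_lt
      (mk_Iic_toType_ord_lt hc.aleph0_le x))).2 fun s => hSl s s.1.2
  have hinter : ⋂ x ∈ C, ⋂ s : e ⁻¹' Iic x, (s : Set α) ∈ l := by
    refine (cardinal_bInter_mem (c := c) ?_).2 fun x _ => hpiece x
    rw [hCcard, Ordinal.cof_toType]
    exact hc.cof_ord_lt
  refine mem_of_superset hinter fun y hy s hs => ?_
  obtain ⟨x, hxC, hx⟩ := hC (e ⟨s, hs⟩)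
  exact mem_iInter.1 (mem_iInter₂.1 hy x hxC) ⟨⟨s, hs⟩, hx⟩

/-- Ulam's matrix. Fix injections `f b : Iio b ↪ c`; the sets `{b | a < b ∧ f b a = ξ}`,
`ξ < c`, cover the `U`-large set `Ioi a`, so one of them, with index `ξ₀ a`, lies in `U`.
Two `a ≠ a'` with `ξ₀ a = ξ₀ a'` then give a `b` with `f b a = f b a'`. -/
theorem Ultrafilter.not_le_cocardinal_of_succ {c : Cardinal.{u}} (hc : ℵ₀ ≤ c)
    (U : Ultrafilter (succ c).ord.ToType)
    [CardinalInterFilter (U : Filter (succ c).ord.ToType) (succ c)] :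
    ¬ (U : Filter (succ c).ord.ToType) ≤ cocardinal _ (isRegular_succ hc) := by
  intro hU
  have f : ∀ b : (succ c).ord.ToType, Iio b ↪ c.ord.ToType := fun b => Classical.choice <| by
    rw [← Cardinal.le_def, mk_ord_toType, ← lt_succ_iff]
    simpa using mk_Iio_lt b
  let A : c.ord.ToType → (succ c).ord.ToType → Set (succ c).ord.ToType :=
    fun ξ a => {b | ∃ h : a < b, f b ⟨a, h⟩ = ξ}
  have hlarge : ∀ a, ∃ ξ, A ξ a ∈ U := fun a => by
    refine U.exists_mem_of_iUnion_mem (c := succ c) (by simp) (mem_of_superset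
      (hU (compl_mem_cocardinal_of_card_lt (mk_Iic_toType_ord_lt (hc.trans (le_succ c)) a)))
      fun b hb => ?_)
    have hab : a < b := not_le.1 hb
    exact mem_iUnion.2 ⟨f b ⟨a, hab⟩, hab, rfl⟩
  choose ξ₀ hξ₀ using hlarge
  have hninj : ¬ Function.Injective ξ₀ := fun hinj =>
    (lt_succ c).not_ge (by simpa using mk_le_of_injective hinj)
  obtain ⟨a, a', heq, hne⟩ := Function.not_injective_iff.1 hninj
  have ha' : A (ξ₀ a) a' ∈ U := heq ▸ hξ₀ a'
  obtain ⟨b, ⟨hab, hfa⟩, ⟨hab', hfa'⟩⟩ := U.nonempty_of_mem (inter_mem (hξ₀ a) ha')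
  exact hne (congrArg Subtype.val ((f b).injective (hfa.trans hfa'.symm)))

theorem IsStronglyCompactCard.exists_ultrafilter_le {κ : Cardinal.{u}}
    (hsc : IsStronglyCompactCard κ) {α : Type u} (F : Filter α) [F.NeBot]
    [CardinalInterFilter F κ] :
    ∃ U : Ultrafilter α, CardinalInterFilter (U : Filter α) κ ∧ ↑U ≤ F := by
  obtain ⟨U, hUκ, hFU⟩ := hsc α F ‹_› (isKComplete_iff_cardinalInterFilter.2 ‹_›)
  exact ⟨U, isKComplete_iff_cardinalInterFilter.1 hUκ, (U.unique hFU).ge⟩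

theorem IsStronglyCompactCard.isRegular {κ : Cardinal.{u}} (hκ : ℵ₀ ≤ κ)
    (hsc : IsStronglyCompactCard κ) : κ.IsRegular := by
  by_contra hreg
  let F := cocardinal (succ κ).ord.ToType (isRegular_succ hκ)
  have : F.NeBot := by
    simpa using (cocardinal_inf_principal_neBot_iff (s := univ)).2 (by simp)
  have : CardinalInterFilter F κ := .of_cardinalInterFilter_of_le F (le_succ κ)
  obtain ⟨U, hUκ, hUF⟩ := hsc.exists_ultrafilter_le F
  have := CardinalInterFilter.succ_of_isSingular (.of_not_isRegular hκ hreg)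
    (U : Filter (succ κ).ord.ToType)
  exact U.not_le_cocardinal_of_succ hκ hUF

theorem Ultrafilter.exists_le_nhds_generateFrom {κ : Cardinal.{u}} {X : Type u}
    {𝒮 : Set (Set X)}
    (hcov : ∀ 𝒰 ⊆ 𝒮, ⋃₀ 𝒰 = Set.univ → ∃ 𝒰₀ ⊆ 𝒰, #𝒰₀ < κ ∧ ⋃₀ 𝒰₀ = Set.univ)
    (U : Ultrafilter X) [CardinalInterFilter (U : Filter X) κ] :
    ∃ x, ↑U ≤ @nhds X (generateFrom 𝒮) x := by
  by_contra! hU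
  have hout : ∀ x, ∃ s, x ∈ s ∧ s ∈ 𝒮 ∧ s ∉ U := fun x => by
    simpa [nhds_generateFrom] using hU x
  obtain ⟨𝒱, h𝒱, h𝒱κ, h𝒱univ⟩ := hcov {s ∈ 𝒮 | s ∉ U} (sep_subset _ _)
    (eq_univ_of_forall fun x => by
      obtain ⟨s, hxs, hs, hsU⟩ := hout x
      exact ⟨s, ⟨hs, hsU⟩, hxs⟩)
  have hcompl : ⋂ s ∈ 𝒱, sᶜ ∈ U :=
    (cardinal_bInter_mem h𝒱κ).2 fun s hs => U.compl_mem_iff_notMem.2 (h𝒱 hs).2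
  rw [← compl_iUnion₂, ← sUnion_eq_biUnion, h𝒱univ, compl_univ] at hcompl
  exact U.empty_notMem hcompl

theorem kCompact_of_forall_ultrafilter_le_nhds {κ : Cardinal.{u}} (hκ : κ.IsRegular)
    (hsc : IsStronglyCompactCard κ) {X : Type u} [t : TopologicalSpace X]
    (hlim : ∀ U : Ultrafilter X, CardinalInterFilter (U : Filter X) κ →
      ∃ x, (U : Filter X) ≤ 𝓝 x) :
    KCompact κ t := by
  intro 𝒰 hopen hcover
  by_contra! hsmall
  let F := cardinalGenerate (compl '' 𝒰) (hκ.nat_lt 2)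
  have : F.NeBot := by
    refine neBot_iff.2 fun hbot => ?_
    obtain ⟨S, hS𝒰, hSκ, hSempty⟩ :=
      (mem_cardinalGenerate_iff (hreg := hκ)).1 (hbot ▸ mem_bot : ∅ ∈ F)
    refine hsmall (compl '' S) ?_ (mk_image_le.trans_lt hSκ) ?_
    · rintro _ ⟨s, hs, rfl⟩
      obtain ⟨V, hV, rfl⟩ := hS𝒰 hs
      rwa [compl_compl]
    · rw [← compl_sInter, subset_empty_iff.1 hSempty, compl_empty]
  have : CardinalInterFilter F κ := cardinalInter_ofCardinalGenerate _ _
  obtain ⟨U, hUκ, hUF⟩ := hsc.exists_ultrafilter_le F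
  obtain ⟨x, hx⟩ := hlim U hUκ
  obtain ⟨V, hV, hxV⟩ := mem_sUnion.1 (hcover ▸ mem_univ x)
  have hVU : V ∈ U := hx (IsOpen.mem_nhds (hopen V hV) hxV)
  exact U.compl_mem_iff_notMem.1 (hUF (CardinalGenerateSets.basic ⟨V, hV, rfl⟩)) hVU

theorem stmt_9 (κ : Cardinal.{u}) (hκ : Cardinal.aleph0 ≤ κ)
    (hsc : IsStronglyCompactCard κ)
    (X : Type u) (t : TopologicalSpace X) (𝒮 : Set (Set X))
    (hsub : t = TopologicalSpace.generateFrom 𝒮)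
    (hcov : ∀ 𝒰 ⊆ 𝒮, ⋃₀ 𝒰 = Set.univ →
      ∃ 𝒰₀ ⊆ 𝒰, Cardinal.mk 𝒰₀ < κ ∧ ⋃₀ 𝒰₀ = Set.univ) :
    KCompact κ t := by
  subst hsub
  exact kCompact_of_forall_ultrafilter_le_nhds (t := generateFrom 𝒮) (hsc.isRegular hκ) hsc
    fun U _ => U.exists_le_nhds_generateFrom hcov
end

section
/- Let T be a tree with the fine wedge topology and x ∈ T. The sets (↑x) \ ↑F, where F ranges over finite subsets of the set I(x) of immediate successors of x, form a neighborhood base at x. -/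
universe u

/-- A partial order is a tree if the set of strict predecessors of every point
is well-ordered by `<`. -/
def IsTree (T : Type u) [PartialOrder T] : Prop :=
  ∀ x : T, IsWellOrder {y : T // y < x} (fun a b => (a : T) < (b : T))
/-- The fine wedge topology on a tree: generated by the cones `↑t = Set.Ici t`
and their complements. -/
def fineWedge (T : Type u) [PartialOrder T] : TopologicalSpace T :=
  TopologicalSpace.generateFrom
    ({s | ∃ t : T, s = Set.Ici t} ∪ {s | ∃ t : T, s = (Set.Ici t)ᶜ})

/-!
The sets `↑x \ ↑F` are open and contain `x`, so they are neighborhoods; they are closed under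
finite intersections (`F ∪ G`), so it suffices that each subbasic open set around `x` contains
one. A cone `↑t ∋ x` contains `↑x`. For a complement `(↑t)ᶜ ∋ x`, either `x < t`, and then the
well-ordered interval below `t` yields an immediate successor `y ≤ t` of `x` with
`↑x \ ↑y ⊆ (↑t)ᶜ`; or `x` and `t` are incomparable, and then `↑x ∩ ↑t = ∅` because the
predecessors of any point form a chain.
-/

open Set Filter TopologicalSpace

variable {T : Type*} [PartialOrder T]

namespace IsTree

lemma exists_covBy_le (hT : IsTree T) {x t : T} (hxt : x < t) : ∃ y, x ⋖ y ∧ y ≤ t := by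
  by_cases h : ∃ z, x < z ∧ z < t
  · obtain ⟨z, hxz, hzt⟩ := h
    obtain ⟨y, hxy, hmin⟩ :=
      (hT t).wf.has_min {y : {y : T // y < t} | x < y} ⟨⟨z, hzt⟩, hxz⟩
    exact ⟨y, ⟨hxy, fun c hxc hcy => hmin ⟨c, hcy.trans y.2⟩ hxc hcy⟩, y.2.le⟩
  · exact ⟨t, ⟨hxt, fun c hxc hct => h ⟨c, hxc, hct⟩⟩, le_rfl⟩

lemma le_or_ge_of_le_of_le (hT : IsTree T) {x t z : T} (hxz : x ≤ z) (htz : t ≤ z) :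
    x ≤ t ∨ t ≤ x := by
  rcases hxz.eq_or_lt with rfl | hxz
  · exact Or.inr htz
  rcases htz.eq_or_lt with rfl | htz
  · exact Or.inl hxz.le
  have := hT z
  rcases trichotomous_of (fun a b : {y : T // y < z} => (a : T) < b) ⟨x, hxz⟩ ⟨t, htz⟩
    with h | h | h
  · exact Or.inl h.le
  · exact Or.inl (congrArg Subtype.val h).le
  · exact Or.inr h.le

end IsTree

def wedgeFilter (x : T) : Filter T :=
  ⨅ (F : Set T) (_ : F ⊆ {y | x ⋖ y} ∧ F.Finite), 𝓟 (Ici x \ ⋃ y ∈ F, Ici y)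

lemma hasBasis_wedgeFilter (x : T) :
    (wedgeFilter x).HasBasis (fun F : Set T => F ⊆ {y | x ⋖ y} ∧ F.Finite)
      (fun F => Ici x \ ⋃ y ∈ F, Ici y) := by
  refine hasBasis_biInf_principal' (fun F hF G hG => ?_) ⟨∅, empty_subset _, finite_empty⟩
  refine ⟨F ∪ G, ⟨union_subset hF.1 hG.1, hF.2.union hG.2⟩, ?_, ?_⟩ <;>
    exact sdiff_subset_sdiff_right (biUnion_subset_biUnion_left (by simp))

lemma IsTree.compl_Ici_mem_wedgeFilter (hT : IsTree T) {x t : T} (htx : ¬ t ≤ x) :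
    (Ici t)ᶜ ∈ wedgeFilter x := by
  rw [(hasBasis_wedgeFilter x).mem_iff]
  by_cases hxt : x < t
  · obtain ⟨y, hxy, hyt⟩ := hT.exists_covBy_le hxt
    refine ⟨{y}, ⟨singleton_subset_iff.2 hxy, finite_singleton y⟩, ?_⟩
    rintro z ⟨-, hz⟩ htz
    exact hz (mem_biUnion rfl (hyt.trans htz))
  · refine ⟨∅, ⟨empty_subset _, finite_empty⟩, ?_⟩
    rintro z ⟨hxz, -⟩ htz
    rcases hT.le_or_ge_of_le_of_le hxz htz with h | h
    · exact hxt (h.lt_of_ne fun hxt => htx hxt.ge)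
    · exact htx h

lemma nhds_fineWedge_le_wedgeFilter (x : T) : @nhds T (fineWedge T) x ≤ wedgeFilter x := by
  let := fineWedge T
  refine (hasBasis_wedgeFilter x).ge_iff.2 fun F ⟨hF, hFfin⟩ => IsOpen.mem_nhds ?_ ?_
  · refine (isOpen_generateFrom_of_mem (Or.inl ⟨x, rfl⟩)).sdiff
      (hFfin.isClosed_biUnion fun y _ => ?_)
    exact isOpen_compl_iff.1 (isOpen_generateFrom_of_mem (Or.inr ⟨y, rfl⟩))
  · simpa using fun y hy => (hF hy).1.not_ge

lemma IsTree.nhds_fineWedge_eq (hT : IsTree T) (x : T) :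
    @nhds T (fineWedge T) x = wedgeFilter x := by
  refine (nhds_fineWedge_le_wedgeFilter x).antisymm (tendsto_nhds_generateFrom_iff.2 ?_)
  rintro s (⟨t, rfl⟩ | ⟨t, rfl⟩) hxs
  · exact mem_of_superset ((hasBasis_wedgeFilter x).mem_of_mem ⟨empty_subset _, finite_empty⟩)
      fun z hz => le_trans hxs hz.1
  · exact hT.compl_Ici_mem_wedgeFilter hxs

theorem stmt_14 (T : Type u) [PartialOrder T] (hT : IsTree T) (x : T) :
    -- each set `↑x \ ↑F`, with `F` a finite set of immediate successors of `x`,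
    -- is a neighborhood of `x`, and these sets form a neighborhood base at `x`
    (∀ F : Set T, F ⊆ {y : T | x ⋖ y} → F.Finite →
      (Set.Ici x \ ⋃ y ∈ F, Set.Ici y) ∈ @nhds T (fineWedge T) x) ∧
    (∀ U ∈ @nhds T (fineWedge T) x,
      ∃ F : Set T, F ⊆ {y : T | x ⋖ y} ∧ F.Finite ∧
        Set.Ici x \ ⋃ y ∈ F, Set.Ici y ⊆ U) := by
  have hbasis := hT.nhds_fineWedge_eq x ▸ hasBasis_wedgeFilter x
  refine ⟨fun F hF hFfin => hbasis.mem_of_mem ⟨hF, hFfin⟩, fun U hU => ?_⟩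
  obtain ⟨F, ⟨hF, hFfin⟩, hFU⟩ := hbasis.mem_iff.1 hU
  exact ⟨F, hF, hFfin, hFU⟩
end

section
/- Let κ be a regular cardinal and T a κ-tree with the fine wedge topology. If T is κ-compact, then T has no cofinal branch (i.e., T is κ-Aronszajn). -/
universe u

/-- The height of a node of a tree: the order type of its set of strict predecessors. -/
noncomputable def nodeHeight {T : Type u} [PartialOrder T] (hT : IsTree T) (x : T) :
    Ordinal.{u} :=
  letI := hT x
  Ordinal.type (fun a b : {y : T // y < x} => (a : T) < (b : T))

/-- A `κ`-tree: a tree of height `κ` all of whose levels have size `< κ`. -/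
def IsKTree {T : Type u} [PartialOrder T] (hT : IsTree T) (κ : Cardinal.{u}) : Prop :=
  (∀ x : T, nodeHeight hT x < κ.ord) ∧
  (∀ o : Ordinal.{u}, o < κ.ord → ∃ x : T, nodeHeight hT x = o) ∧
  (∀ o : Ordinal.{u}, Cardinal.mk {x : T | nodeHeight hT x = o} < κ)

/-! The complements `(↑x)ᶜ` of the cones over the nodes `x` of a cofinal branch `b` form an open
cover of `T`, since no node lies above all of `b`. Any fewer than `κ` of them miss a node of `b`:
by regularity of `κ` their heights are bounded below `κ`, and the node of `b` at a larger height
lies above all of them. -/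

lemma fineWedge_isOpen_compl_Ici {T : Type u} [PartialOrder T] (t : T) :
    (fineWedge T).IsOpen (Set.Ici t)ᶜ :=
  TopologicalSpace.GenerateOpen.basic _ (Or.inr ⟨t, rfl⟩)

section Tree

variable {T : Type u} [PartialOrder T] (hT : IsTree T)

lemma nodeHeight_lt_nodeHeight {x y : T} (h : x < y) : nodeHeight hT x < nodeHeight hT y := by
  have := hT x
  have := hT y
  refine PrincipalSeg.ordinal_type_lt ⟨⟨⟨fun z => ⟨z.1, z.2.trans h⟩, ?_⟩, Iff.rfl⟩, ⟨x, h⟩, ?_⟩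
  · intro a b hab
    exact Subtype.ext (congrArg Subtype.val hab :)
  · rintro ⟨z, hz⟩
    exact ⟨fun ⟨w, hw⟩ => hw ▸ w.2, fun hzx => ⟨⟨z, hzx⟩, rfl⟩⟩

lemma nodeHeight_le_nodeHeight {x y : T} (h : x ≤ y) : nodeHeight hT x ≤ nodeHeight hT y := by
  rcases h.lt_or_eq with h | rfl
  · exact (nodeHeight_lt_nodeHeight hT h).le
  · exact le_rfl

lemma IsChain.le_of_nodeHeight_lt {b : Set T} (hb : IsChain (· ≤ ·) b) {x y : T} (hx : x ∈ b)
    (hy : y ∈ b) (h : nodeHeight hT x < nodeHeight hT y) : x ≤ y :=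
  (hb.total hx hy).resolve_right fun hyx => (nodeHeight_le_nodeHeight hT hyx).not_gt h

lemma exists_mem_nodeHeight_gt {κ : Cardinal.{u}} (hκ : Cardinal.aleph0 ≤ κ) {b : Set T}
    (hcof : ∀ o < κ.ord, ∃ x ∈ b, nodeHeight hT x = o) {o : Ordinal.{u}} (ho : o < κ.ord) :
    ∃ x ∈ b, o < nodeHeight hT x := by
  obtain ⟨x, hxb, hx⟩ := hcof _ ((Cardinal.isSuccLimit_ord hκ).succ_lt ho)
  exact ⟨x, hxb, hx ▸ Order.lt_succ o⟩

lemma iUnion_compl_Ici_eq_univ {b : Set T}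
    (hb : ∀ y : T, ∃ x ∈ b, nodeHeight hT y < nodeHeight hT x) :
    ⋃ x ∈ b, (Set.Ici x)ᶜ = Set.univ := by
  refine Set.eq_univ_of_forall fun y => ?_
  obtain ⟨x, hxb, hyx⟩ := hb y
  exact Set.mem_biUnion hxb fun hxy => (nodeHeight_le_nodeHeight hT hxy).not_gt hyx

lemma IsChain.exists_upperBound_of_mk_lt {κ : Cardinal.{u}} (hκ : κ.IsRegular)
    (hheight : ∀ x : T, nodeHeight hT x < κ.ord) {b : Set T} (hb : IsChain (· ≤ ·) b)
    (hcof : ∀ o < κ.ord, ∃ x ∈ b, nodeHeight hT x = o) {s : Set T} (hsb : s ⊆ b)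
    (hs : Cardinal.mk s < κ) : ∃ y ∈ b, ∀ x ∈ s, x ≤ y := by
  have hsup : ⨆ x : s, nodeHeight hT x < κ.ord :=
    Ordinal.iSup_lt_of_lt_cof (by rwa [hκ.cof_ord]) fun x => hheight x
  obtain ⟨y, hyb, hy⟩ := exists_mem_nodeHeight_gt hT hκ.aleph0_le hcof hsup
  refine ⟨y, hyb, fun x hx => hb.le_of_nodeHeight_lt hT (hsb hx) hyb ?_⟩
  exact (le_ciSup Ordinal.bddAbove_of_small (⟨x, hx⟩ : s)).trans_lt hy

end Tree

theorem stmt_15_general (κ : Cardinal.{u}) (hreg : κ.IsRegular)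
    (T : Type u) [PartialOrder T] (hT : IsTree T) (hK : IsKTree hT κ)
    (hc : KCompact κ (fineWedge T)) :
    -- `T` has no cofinal branch: no maximal chain meeting every level
    ¬ ∃ b : Set T, IsChain (· ≤ ·) b ∧
        (∀ c : Set T, IsChain (· ≤ ·) c → b ⊆ c → b = c) ∧
        (∀ o : Ordinal.{u}, o < κ.ord → ∃ x ∈ b, nodeHeight hT x = o) := by
  rintro ⟨b, hchain, -, hcof⟩
  have hunbounded (y : T) : ∃ x ∈ b, nodeHeight hT y < nodeHeight hT x :=
    exists_mem_nodeHeight_gt hT hreg.aleph0_le hcof (hK.1 y)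
  obtain ⟨𝒰, h𝒰b, h𝒰κ, h𝒰⟩ := hc ((fun x => (Set.Ici x)ᶜ) '' b)
    (by rintro _ ⟨x, -, rfl⟩; exact fineWedge_isOpen_compl_Ici x)
    (by rw [Set.sUnion_image]; exact iUnion_compl_Ici_eq_univ hT hunbounded)
  obtain ⟨s, hsb, rfl⟩ := Set.subset_image_iff.1 h𝒰b
  rw [Cardinal.mk_image_eq (f := fun x : T => (Set.Ici x)ᶜ)
    (compl_injective.comp Set.Ici_injective)] at h𝒰κ
  obtain ⟨y, -, hy⟩ := hchain.exists_upperBound_of_mk_lt hT hreg hK.1 hcof hsb h𝒰κ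
  have hy𝒰 : y ∈ ⋃₀ ((fun x => (Set.Ici x)ᶜ) '' s) := h𝒰 ▸ Set.mem_univ y
  obtain ⟨_, ⟨x, hxs, rfl⟩, hyx⟩ := hy𝒰
  exact hyx (hy x hxs)

theorem stmt_15 (κ : Cardinal.{u}) (hκ : Cardinal.aleph0 ≤ κ) (hreg : κ.IsRegular)
    (T : Type u) [PartialOrder T] (hT : IsTree T) (hK : IsKTree hT κ)
    (hc : KCompact κ (fineWedge T)) :
    -- `T` has no cofinal branch: no maximal chain meeting every level
    ¬ ∃ b : Set T, IsChain (· ≤ ·) b ∧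
        (∀ c : Set T, IsChain (· ≤ ·) c → b ⊆ c → b = c) ∧
        (∀ o : Ordinal.{u}, o < κ.ord → ∃ x ∈ b, nodeHeight hT x = o) :=
  stmt_15_general κ hreg T hT hK hc
end

section
/- Let T be an ℵ₁-tree. Then T with the fine wedge topology is Lindelöf if and only if every finitely splitting subtree of T of height ω₁ is countable (equivalently: every downward-closed subset S ⊆ T in which each point has only finitely many immediate successors within S is countable). -/
universe u

/-!
If `S` is an uncountable finitely splitting subtree, the cones `↑x` for `x ∉ S` together with the
wedges `↑t \ ⋃ {↑s | t ⋖ s, s ∈ S}` for `t ∈ S` form an open cover of `T`; each wedge meets `S`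
only in `t`, so there is no countable subcover.

Conversely, fix an open cover. The nodes whose cones admit no countable subcover form a subtree
`N`. Each `x` has a neighbourhood `↑x \ (↑s₁ ∪ ⋯ ∪ ↑sₙ)` inside one member `U` of the cover, and
every immediate successor of `x` lying below none of the `sᵢ` has its whole cone inside `U`; so `N`
is finitely splitting, hence countable. The heights of its nodes are then bounded by some `δ < ω₁`,
so the minimal nodes outside `N`, having height at most `δ + 1`, lie on countably many countable
levels. Their countable subcovers, together with one member of the cover per node of `N`, cover `T`.
-/

open Set Order

section

variable {T : Type u} [PartialOrder T]

namespace IsTree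

theorem le_total_of_le (hT : IsTree T) {a b c : T} (ha : a ≤ c) (hb : b ≤ c) :
    a ≤ b ∨ b ≤ a := by
  rcases ha.lt_or_eq with ha | rfl
  · rcases hb.lt_or_eq with hb | rfl
    · let _ := hT c
      rcases trichotomous_of (fun x y : {z : T // z < c} => (x : T) < y) ⟨a, ha⟩ ⟨b, hb⟩
        with h | h | h
      · exact .inl h.le
      · exact .inl (congrArg Subtype.val h).le
      · exact .inr h.le
    · exact .inl ha.le
  · exact .inr hb

theorem wellFoundedLT (hT : IsTree T) : WellFoundedLT T := by
  refine ⟨⟨fun x => ⟨x, fun y hyx => ?_⟩⟩⟩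
  have hacc : ∀ w : {z : T // z < x}, Acc (· < ·) (w : T) := fun w =>
    (hT x).wf.induction (C := fun w => Acc (· < ·) (w : T)) w
      fun w ih => ⟨_, fun v hv => ih ⟨v, hv.trans w.2⟩ hv⟩
  exact hacc ⟨y, hyx⟩

theorem eq_of_covBy_of_le (hT : IsTree T) {x a b s : T} (ha : x ⋖ a) (hb : x ⋖ b)
    (has : a ≤ s) (hbs : b ≤ s) : a = b := by
  rcases hT.le_total_of_le has hbs with hab | hba
  · exact hab.eq_of_not_lt (hb.2 ha.lt)
  · exact (hba.eq_of_not_lt (ha.2 hb.lt)).symm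

theorem finite_covBy_le (hT : IsTree T) (x : T) {F : Set T} (hF : F.Finite) :
    {z | x ⋖ z ∧ ∃ s ∈ F, z ≤ s}.Finite := by
  refine (hF.biUnion fun s _ => Set.Subsingleton.finite (s := {z | x ⋖ z ∧ z ≤ s}) ?_).subset ?_
  · rintro a ⟨ha, has⟩ b ⟨hb, hbs⟩
    exact hT.eq_of_covBy_of_le ha hb has hbs
  · rintro z ⟨hz, s, hs, hzs⟩
    exact mem_biUnion hs ⟨hz, hzs⟩

theorem typein_eq_nodeHeight (hT : IsTree T) (z : T) (w : {v : T // v < z}) :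
    @Ordinal.typein _ (fun a b : {v : T // v < z} => (a : T) < b) (hT z) w
      = nodeHeight hT w := by
  let _ := hT z
  let _ := hT w.val
  rw [← Ordinal.type_subrel]
  let f : (fun a b : {y : T // y < w.val} => (a : T) < b) ≃r
      Subrel (fun a b : {v : T // v < z} => (a : T) < b) {b | (b : T) < w.val} :=
    ⟨⟨fun u => ⟨⟨u.1, u.2.trans w.2⟩, u.2⟩, fun b => ⟨b.1.1, b.2⟩, fun _ => rfl, fun _ => rfl⟩,
      Iff.rfl⟩
  have : IsWellOrder _ (Subrel (fun a b : {v : T // v < z} => (a : T) < b) {b | (b : T) < w.val}) :=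
    Subrel.instIsWellOrderSubtype _ _
  exact f.ordinalType_congr.symm

theorem nodeHeight_le_succ (hT : IsTree T) {z : T} {δ : Ordinal.{u}}
    (h : ∀ w < z, nodeHeight hT w ≤ δ) : nodeHeight hT z ≤ succ δ := by
  let _ := hT z
  by_contra! hlt
  obtain ⟨w, hw⟩ := Ordinal.typein_surj (fun a b : {v : T // v < z} => (a : T) < b) hlt
  have hwδ := h w w.2
  rw [← hT.typein_eq_nodeHeight z w, hw] at hwδ
  exact (lt_succ δ).not_ge hwδ

section Heights

open Cardinal

theorem exists_nodeHeight_le_of_countable (hT : IsTree T)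
    (hheight : ∀ x, nodeHeight hT x < (aleph 1).ord) {A : Set T} (hA : A.Countable) :
    ∃ δ < (aleph 1).ord, ∀ a ∈ A, nodeHeight hT a ≤ δ := by
  have := hA.to_subtype
  refine ⟨⨆ a : A, nodeHeight hT a, Ordinal.iSup_lt_of_lt_cof ?_ fun a => hheight a,
    fun a ha => Ordinal.le_iSup (fun a : A => nodeHeight hT a) ⟨a, ha⟩⟩
  rw [isRegular_aleph_one.cof_ord]
  exact mk_le_aleph0.trans_lt aleph0_lt_aleph_one

theorem countable_setOf_nodeHeight_le (hT : IsTree T)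
    (hlev : ∀ o, {x | nodeHeight hT x = o}.Countable) {δ : Ordinal.{u}} (hδ : δ < (aleph 1).ord) :
    {x | nodeHeight hT x ≤ δ}.Countable := by
  have hIic : (Iic δ).Countable := by
    rw [← Iio_succ, ← le_aleph0_iff_set_countable, mk_Iio_ordinal, lift_le_aleph0,
      ← lt_aleph_one_iff, ← lt_ord]
    exact (isSuccLimit_ord (aleph0_le_aleph 1)).succ_lt hδ
  exact (hIic.biUnion fun o _ => hlev o).mono fun x (hx : nodeHeight hT x ≤ δ) =>
    mem_biUnion (x := nodeHeight hT x) hx rfl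

theorem countable_setOf_forall_lt_mem (hT : IsTree T) (hheight : ∀ x, nodeHeight hT x < (aleph 1).ord)
    (hlev : ∀ o, {x | nodeHeight hT x = o}.Countable) {A : Set T} (hA : A.Countable) :
    {z | ∀ w < z, w ∈ A}.Countable := by
  obtain ⟨δ, hδ, hAδ⟩ := hT.exists_nodeHeight_le_of_countable hheight hA
  refine (hT.countable_setOf_nodeHeight_le hlev
    ((isSuccLimit_ord (aleph0_le_aleph 1)).succ_lt hδ)).mono fun z hz => ?_
  exact hT.nodeHeight_le_succ fun w hw => hAδ w (hz w hw)

end Heights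

end IsTree

/-- For finite `F` these are the basic open sets of the fine wedge topology. -/
def wedge (x : T) (F : Set T) : Set T :=
  Ici x \ ⋃ s ∈ F, Ici s

theorem mem_wedge {x y : T} {F : Set T} : y ∈ wedge x F ↔ x ≤ y ∧ ∀ s ∈ F, ¬s ≤ y := by
  simp [wedge]

theorem wedge_anti {x : T} {F G : Set T} (h : F ⊆ G) : wedge x G ⊆ wedge x F :=
  sdiff_subset_sdiff_right (biUnion_subset_biUnion_left h)

theorem fineWedge_isOpen_Ici (t : T) : (fineWedge T).IsOpen (Ici t) :=
  .basic _ (.inl ⟨t, rfl⟩)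

theorem fineWedge_isOpen_Ici_compl (t : T) : (fineWedge T).IsOpen (Ici t)ᶜ :=
  .basic _ (.inr ⟨t, rfl⟩)

theorem fineWedge_isOpen_wedge (x : T) {F : Set T} (hF : F.Finite) :
    (fineWedge T).IsOpen (wedge x F) := by
  let _ := fineWedge T
  rw [wedge, sdiff_eq, compl_iUnion₂]
  exact IsOpen.inter (fineWedge_isOpen_Ici x) (hF.isOpen_biInter fun s _ => fineWedge_isOpen_Ici_compl s)

theorem exists_wedge_subset_of_fineWedge_isOpen {U : Set T} (hU : (fineWedge T).IsOpen U)
    {x : T} (hx : x ∈ U) : ∃ F : Set T, F.Finite ∧ x ∈ wedge x F ∧ wedge x F ⊆ U := by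
  induction hU generalizing x with
  | basic s hs =>
    rcases hs with ⟨t, rfl⟩ | ⟨t, rfl⟩
    · exact ⟨∅, finite_empty, by simp [mem_wedge], fun y hy => le_trans hx (mem_wedge.1 hy).1⟩
    · exact ⟨{t}, finite_singleton t, by simpa [mem_wedge] using hx,
        fun y hy => by simpa [mem_wedge] using (mem_wedge.1 hy).2⟩
  | univ => exact ⟨∅, finite_empty, by simp [mem_wedge], subset_univ _⟩
  | inter s t _ _ ihs iht =>
    obtain ⟨F, hF, hxF, hFs⟩ := ihs hx.1
    obtain ⟨G, hG, hxG, hGt⟩ := iht hx.2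
    refine ⟨F ∪ G, hF.union hG, mem_wedge.2 ⟨le_rfl, fun s hs => ?_⟩,
      fun y hy => ⟨hFs (wedge_anti subset_union_left hy), hGt (wedge_anti subset_union_right hy)⟩⟩
    exact hs.elim ((mem_wedge.1 hxF).2 s) ((mem_wedge.1 hxG).2 s)
  | sUnion S _ ih =>
    obtain ⟨s, hsS, hxs⟩ := hx
    obtain ⟨F, hF, hxF, hFs⟩ := ih s hsS hxs
    exact ⟨F, hF, hxF, hFs.trans (subset_sUnion_of_mem hsS)⟩

namespace IsTree

theorem Ici_subset_wedge_of_covBy (hT : IsTree T) {x z : T} {F : Set T} (hx : x ∈ wedge x F)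
    (hxz : x ⋖ z) (hz : ∀ s ∈ F, ¬z ≤ s) : Ici z ⊆ wedge x F := by
  refine fun y hy => mem_wedge.2 ⟨hxz.le.trans hy, fun s hs hsy => ?_⟩
  have hsx : ¬s ≤ x := (mem_wedge.1 hx).2 s hs
  rcases hT.le_total_of_le hsy hy with hsz | hzs
  · have hxs : x < s := lt_of_le_not_ge ((hT.le_total_of_le hsz hxz.le).resolve_left hsx) hsx
    exact hz s hs (hsz.eq_of_not_lt (hxz.2 hxs)).ge
  · exact hz s hs hzs

theorem eq_of_mem_wedge_covBy (hT : IsTree T) {S : Set T} (hS : ∀ x ∈ S, ∀ y, y ≤ x → y ∈ S)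
    {t y : T} (hyS : y ∈ S) (hy : y ∈ wedge t {s ∈ S | t ⋖ s}) : y = t := by
  have := hT.wellFoundedLT
  obtain ⟨hty, hno⟩ := mem_wedge.1 hy
  by_contra hne
  obtain ⟨m, htm, hmy⟩ := exists_covBy_le_of_lt (hty.lt_of_ne (Ne.symm hne))
  exact hno m ⟨hS y hyS m hmy, htm⟩ hmy

theorem countable_of_countable_subcovers (hT : IsTree T)
    (hLin : ∀ 𝒰 : Set (Set T), (∀ U ∈ 𝒰, (fineWedge T).IsOpen U) → ⋃₀ 𝒰 = univ →
      ∃ 𝒰₀ ⊆ 𝒰, 𝒰₀.Countable ∧ ⋃₀ 𝒰₀ = univ)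
    {S : Set T} (hS : ∀ x ∈ S, ∀ y, y ≤ x → y ∈ S) (hfin : ∀ x ∈ S, {y ∈ S | x ⋖ y}.Finite) :
    S.Countable := by
  set 𝒰 := Ici '' Sᶜ ∪ (fun t => wedge t {s ∈ S | t ⋖ s}) '' S
  have hopen : ∀ U ∈ 𝒰, (fineWedge T).IsOpen U := by
    rintro _ (⟨x, -, rfl⟩ | ⟨t, ht, rfl⟩)
    exacts [fineWedge_isOpen_Ici x, fineWedge_isOpen_wedge t (hfin t ht)]
  have hcov : ⋃₀ 𝒰 = univ := eq_univ_of_forall fun y => by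
    by_cases hy : y ∈ S
    · exact ⟨_, .inr ⟨y, hy, rfl⟩, mem_wedge.2 ⟨le_rfl, fun s hs => hs.2.lt.not_ge⟩⟩
    · exact ⟨_, .inl ⟨y, hy, rfl⟩, self_mem_Ici⟩
  have hsub : ∀ W ∈ 𝒰, (W ∩ S).Subsingleton := by
    rintro _ (⟨x, hx, rfl⟩ | ⟨t, -, rfl⟩)
    · rintro y ⟨hxy, hy⟩
      exact (hx (hS y hy x hxy)).elim
    · exact subsingleton_of_forall_eq t fun y hy => hT.eq_of_mem_wedge_covBy hS hy.2 hy.1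
  obtain ⟨𝒰₀, h𝒰₀, hc, hcov₀⟩ := hLin 𝒰 hopen hcov
  refine (hc.biUnion fun W hW => (hsub W (h𝒰₀ hW)).countable).mono fun y hy => ?_
  obtain ⟨W, hW, hyW⟩ := hcov₀.symm ▸ mem_univ y
  exact mem_biUnion hW ⟨hyW, hy⟩

end IsTree

def notCountablyCovered (𝒰 : Set (Set T)) : Set T :=
  {x | ¬∃ 𝒱 ⊆ 𝒰, 𝒱.Countable ∧ Ici x ⊆ ⋃₀ 𝒱}

theorem notCountablyCovered_mem_of_le {𝒰 : Set (Set T)} :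
    ∀ x ∈ notCountablyCovered 𝒰, ∀ y, y ≤ x → y ∈ notCountablyCovered 𝒰 :=
  fun _ hx _ hyx ⟨𝒱, h𝒱, hc, hcov⟩ => hx ⟨𝒱, h𝒱, hc, (Ici_subset_Ici.2 hyx).trans hcov⟩

namespace IsTree

theorem finite_covBy_notCountablyCovered (hT : IsTree T) {𝒰 : Set (Set T)}
    (hopen : ∀ U ∈ 𝒰, (fineWedge T).IsOpen U) (hcov : ⋃₀ 𝒰 = univ) (x : T) :
    {y ∈ notCountablyCovered 𝒰 | x ⋖ y}.Finite := by
  obtain ⟨U, hU, hxU⟩ := hcov.symm ▸ mem_univ x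
  obtain ⟨F, hF, hxF, hFU⟩ := exists_wedge_subset_of_fineWedge_isOpen (hopen U hU) hxU
  refine (hT.finite_covBy_le x hF).subset fun z ⟨hzN, hxz⟩ => ⟨hxz, ?_⟩
  by_contra! hno
  exact hzN ⟨{U}, singleton_subset_iff.2 hU, countable_singleton U,
    by simpa using (hT.Ici_subset_wedge_of_covBy hxF hxz hno).trans hFU⟩

theorem exists_countable_subcover (hT : IsTree T) (hheight : ∀ x, nodeHeight hT x < (Cardinal.aleph 1).ord)
    (hlev : ∀ o, {x | nodeHeight hT x = o}.Countable) {𝒰 : Set (Set T)} (hcov : ⋃₀ 𝒰 = univ)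
    (hN : (notCountablyCovered 𝒰).Countable) :
    ∃ 𝒰₀ ⊆ 𝒰, 𝒰₀.Countable ∧ ⋃₀ 𝒰₀ = univ := by
  have := hT.wellFoundedLT
  set N := notCountablyCovered 𝒰
  set E := {z | z ∉ N ∧ ∀ w < z, w ∈ N}
  have hE : E.Countable :=
    (hT.countable_setOf_forall_lt_mem hheight hlev hN).mono fun z hz => hz.2
  choose U hU𝒰 hxU using fun x => (hcov.symm ▸ mem_univ x : x ∈ ⋃₀ 𝒰)
  choose! 𝒱 h𝒱𝒰 h𝒱c h𝒱cov using fun z (hz : z ∈ E) => not_not.1 hz.1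
  refine ⟨U '' N ∪ ⋃ z ∈ E, 𝒱 z,
    union_subset (image_subset_iff.2 fun x _ => hU𝒰 x) (iUnion₂_subset h𝒱𝒰),
    (hN.image U).union (hE.biUnion h𝒱c), eq_univ_of_forall fun y => ?_⟩
  by_cases hy : y ∈ N
  · exact ⟨U y, .inl (mem_image_of_mem U hy), hxU y⟩
  · obtain ⟨m, hmy, hm⟩ := exists_minimal_le_of_wellFoundedLT (· ∉ N) y hy
    have hmE : m ∈ E := ⟨hm.prop, fun w hw => by_contra fun hwN => hw.not_ge (hm.2 hwN hw.le)⟩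
    obtain ⟨W, hW, hyW⟩ := h𝒱cov m hmE hmy
    exact ⟨W, .inr (mem_biUnion hmE hW), hyW⟩

end IsTree

end

theorem stmt_17 (T : Type u) [PartialOrder T] (hT : IsTree T)
    (hK : IsKTree hT (Cardinal.aleph 1)) :
    -- `T` with the fine wedge topology is Lindelöf
    (∀ 𝒰 : Set (Set T), (∀ U ∈ 𝒰, (fineWedge T).IsOpen U) → ⋃₀ 𝒰 = Set.univ →
        ∃ 𝒰₀ ⊆ 𝒰, 𝒰₀.Countable ∧ ⋃₀ 𝒰₀ = Set.univ) ↔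
    -- iff every downward-closed subset in which every point has finitely many
    -- immediate successors (within the subset) is countable
    (∀ S : Set T, (∀ x ∈ S, ∀ y : T, y ≤ x → y ∈ S) →
        (∀ x ∈ S, {y ∈ S | x ⋖ y}.Finite) → S.Countable) := by
  have hlev : ∀ o, {x | nodeHeight hT x = o}.Countable := fun o =>
    Cardinal.le_aleph0_iff_set_countable.1 (Cardinal.lt_aleph_one_iff.1 (hK.2.2 o))
  refine ⟨fun hLin S hS hfin => hT.countable_of_countable_subcovers hLin hS hfin,
    fun hST 𝒰 hopen hcov => hT.exists_countable_subcover hK.1 hlev hcov ?_⟩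
  exact hST _ notCountablyCovered_mem_of_le fun x _ => hT.finite_covBy_notCountablyCovered hopen hcov x
end

section
/- Let T be a tree with no uncountable chains, and let 𝒜 be an uncountable collection of pairwise disjoint nonempty finite subsets of T. Then there exist distinct a, b ∈ 𝒜 such that every x ∈ a is incomparable with every y ∈ b. -/
universe u

/-! Suppose no two members of `𝒜` are totally incomparable. Uncountably many members have the
same size `n`; enumerate each of them by `Fin n` and fix an ultrafilter `𝒰` on them containing no
countable set. Only countably many members meet the countable set of points below a given finite
set, so for each `a ∈ 𝒜` some `x ∈ a` lies below the `j`-th point of `𝒰`-almost every `b`. For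
uncountably many `a` the index `j` is the same, and then any two of these points `x` lie below a
common point, the `j`-th point of some `b`; they form an uncountable chain. -/

open Filter Set

theorem Set.exists_not_countable_sep {α β : Type*} [Countable β] {s : Set α}
    (hs : ¬ s.Countable) {P : α → β → Prop} (hP : ∀ a ∈ s, ∃ b, P a b) :
    ∃ b, ¬ {a ∈ s | P a b}.Countable := by
  by_contra! h
  refine hs ((countable_iUnion h).mono fun a ha => ?_)
  obtain ⟨b, hb⟩ := hP a ha
  exact mem_iUnion.2 ⟨b, ha, hb⟩

theorem Set.PairwiseDisjoint.countable_setOf_inter_nonempty {α : Type*} {𝒜 : Set (Set α)}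
    (h𝒜 : 𝒜.PairwiseDisjoint id) {S : Set α} (hS : S.Countable) :
    {b ∈ 𝒜 | (b ∩ S).Nonempty}.Countable := by
  refine (hS.biUnion fun x _ => Set.Subsingleton.countable (s := {b ∈ 𝒜 | x ∈ b}) ?_).mono ?_
  · exact fun b hb b' hb' => h𝒜.elim_set hb.1 hb'.1 x hb.2 hb'.2
  · rintro b ⟨hb, x, hxb, hxS⟩
    exact mem_biUnion hxS ⟨hb, hxb⟩

theorem Set.Finite.exists_range_eq {α : Type*} {s : Set α} (hs : s.Finite) :
    ∃ e : Fin s.ncard → α, range e = s := by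
  have := hs.to_subtype
  let E : s ≃ Fin s.ncard := Finite.equivFinOfCardEq rfl
  exact ⟨Subtype.val ∘ E.symm, Subset.antisymm (range_subset_iff.2 fun i => (E.symm i).2)
    fun y hy => ⟨E ⟨y, hy⟩, by simp⟩⟩

theorem Ultrafilter.exists_le_cocountable {α : Type*} {s : Set α} (hs : ¬ s.Countable) :
    ∃ 𝒰 : Ultrafilter α, s ∈ 𝒰 ∧ (𝒰 : Filter α) ≤ cocountable := by
  have : (cocountable ⊓ 𝓟 s).NeBot := by
    rw [cocardinal_inf_principal_neBot_iff, Cardinal.aleph_one_le_iff, ← not_le,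
      Cardinal.le_aleph0_iff_set_countable]
    exact hs
  obtain ⟨𝒰, h𝒰⟩ := exists_ultrafilter_le (cocountable ⊓ 𝓟 s)
  exact ⟨𝒰, le_principal_iff.1 (h𝒰.trans inf_le_right), h𝒰.trans inf_le_left⟩

theorem Ultrafilter.eventually_notMem_of_countable {α : Type*} {𝒰 : Ultrafilter α}
    (h𝒰 : (𝒰 : Filter α) ≤ cocountable) {s : Set α} (hs : s.Countable) :
    ∀ᶠ a in (𝒰 : Filter α), a ∉ s :=
  h𝒰 (show sᶜ ∈ cocountable from mem_cocountable.2 (by rwa [compl_compl]))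

namespace IsTree

variable {T : Type u} [PartialOrder T]

theorem isChain_Iic (hT : IsTree T) (z : T) : IsChain (· ≤ ·) (Iic z) := by
  intro x (hx : x ≤ z) y (hy : y ≤ z) _
  rcases hx.lt_or_eq with hxz | rfl
  · rcases hy.lt_or_eq with hyz | rfl
    · have := hT z
      rcases trichotomous_of (fun a b : {w // w < z} => (a : T) < b) ⟨x, hxz⟩ ⟨y, hyz⟩
        with h | h | h
      · exact Or.inl h.le
      · exact Or.inl (congrArg Subtype.val h).le
      · exact Or.inr h.le
    · exact Or.inl hx
  · exact Or.inr hy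

theorem isChain_of_forall_eventually_lt (hT : IsTree T) {ι : Type*} {f : Filter ι} [f.NeBot]
    {y : ι → T} {s : Set T} (hs : ∀ x ∈ s, ∀ᶠ i in f, x < y i) : IsChain (· ≤ ·) s := by
  intro x hx x' hx' _
  obtain ⟨i, hxi, hx'i⟩ := ((hs x hx).and (hs x' hx')).exists
  exact (hT.isChain_Iic (y i)).total hxi.le hx'i.le

/-- Eventually comparability can only go upwards: the points below `a` form finitely many
countable chains, which meet only countably many members of the disjoint family `𝒜`. -/
theorem exists_eventually_lt (hT : IsTree T)
    (hchain : ∀ C : Set T, IsChain (· ≤ ·) C → C.Countable)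
    {𝒜 : Set (Set T)} (hdisj : 𝒜.PairwiseDisjoint id) {𝒰 : Ultrafilter (Set T)}
    (h𝒰 : (𝒰 : Filter (Set T)) ≤ cocountable) (h𝒜 : 𝒜 ∈ 𝒰) {n : ℕ} {e : Set T → Fin n → T}
    (he : ∀ᶠ b in (𝒰 : Filter (Set T)), b ⊆ range (e b)) {a : Set T} (ha : a.Finite)
    (hcomp : ∀ᶠ b in (𝒰 : Filter (Set T)), ∃ x ∈ a, ∃ y ∈ b, x ≤ y ∨ y ≤ x) :
    ∃ j, ∃ x ∈ a, ∀ᶠ b in (𝒰 : Filter (Set T)), x < e b j := by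
  have hbelow : (⋃ x ∈ a, Iic x).Countable :=
    ha.countable.biUnion fun x _ => hchain _ (hT.isChain_Iic x)
  have hup : ∀ᶠ b in (𝒰 : Filter (Set T)), ∃ j, ∃ x ∈ a, x < e b j := by
    filter_upwards [hcomp, he, h𝒜,
      Ultrafilter.eventually_notMem_of_countable h𝒰
        (hdisj.countable_setOf_inter_nonempty hbelow)] with b hb hbe hb𝒜 hbmeet
    obtain ⟨x, hx, y, hy, hxy⟩ := hb
    have hyx : ¬ y ≤ x := fun hyx => hbmeet ⟨hb𝒜, y, hy, mem_biUnion hx hyx⟩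
    obtain ⟨j, rfl⟩ := hbe hy
    exact ⟨j, x, hx, lt_of_le_not_ge (hxy.resolve_right hyx) hyx⟩
  obtain ⟨j, hj⟩ := Ultrafilter.eventually_exists_iff.1 hup
  exact ⟨j, (Ultrafilter.eventually_exists_mem_iff ha).1 hj⟩

end IsTree

theorem stmt_19_general (T : Type u) [PartialOrder T] (hT : IsTree T)
    (hchain : ∀ C : Set T, IsChain (· ≤ ·) C → C.Countable)
    (𝒜 : Set (Set T)) (hunc : ¬ 𝒜.Countable)
    (hfin : ∀ a ∈ 𝒜, a.Finite)
    (hdisj : ∀ a ∈ 𝒜, ∀ b ∈ 𝒜, a ≠ b → Disjoint a b) :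
    ∃ a ∈ 𝒜, ∃ b ∈ 𝒜, a ≠ b ∧
      ∀ x ∈ a, ∀ y ∈ b, ¬ x ≤ y ∧ ¬ y ≤ x := by
  by_contra! hcomp
  have : Nonempty T := by
    by_contra h
    rw [not_nonempty_iff] at h
    exact hunc (toFinite 𝒜).countable
  obtain ⟨n, hn⟩ := exists_not_countable_sep hunc fun a _ => ⟨a.ncard, rfl⟩
  obtain ⟨𝒰, hℬ, h𝒰⟩ := Ultrafilter.exists_le_cocountable hn
  have hℬe : ∀ b ∈ {a ∈ 𝒜 | a.ncard = n}, ∃ e : Fin n → T, b ⊆ range e := by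
    rintro b ⟨hb, rfl⟩
    obtain ⟨e, he⟩ := (hfin b hb).exists_range_eq
    exact ⟨e, he.ge⟩
  choose! e he using hℬe
  have hlow : ∀ a ∈ 𝒜, ∃ j, ∃ x ∈ a, ∀ᶠ b in (𝒰 : Filter (Set T)), x < e b j := by
    intro a ha
    refine hT.exists_eventually_lt hchain hdisj h𝒰 (mem_of_superset hℬ (sep_subset _ _))
      (mem_of_superset hℬ he) (hfin a ha) ?_
    filter_upwards [hℬ, Ultrafilter.eventually_notMem_of_countable h𝒰 (countable_singleton a)]
      with b hb hba
    obtain ⟨x, hx, y, hy, hxy⟩ := hcomp a ha b hb.1 (Ne.symm hba)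
    exact ⟨x, hx, y, hy, or_iff_not_imp_left.2 hxy⟩
  obtain ⟨j, hj⟩ := exists_not_countable_sep hunc hlow
  have hchainj : IsChain (· ≤ ·) {x | ∀ᶠ b in (𝒰 : Filter (Set T)), x < e b j} :=
    hT.isChain_of_forall_eventually_lt fun _ hx => hx
  exact hj ((PairwiseDisjoint.countable_setOf_inter_nonempty hdisj (hchain _ hchainj)).mono
    fun _ ha => ha)

theorem stmt_19 (T : Type u) [PartialOrder T] (hT : IsTree T)
    (hchain : ∀ C : Set T, IsChain (· ≤ ·) C → C.Countable)
    (𝒜 : Set (Set T)) (hunc : ¬ 𝒜.Countable)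
    (hne : ∀ a ∈ 𝒜, a.Nonempty) (hfin : ∀ a ∈ 𝒜, a.Finite)
    (hdisj : ∀ a ∈ 𝒜, ∀ b ∈ 𝒜, a ≠ b → Disjoint a b) :
    ∃ a ∈ 𝒜, ∃ b ∈ 𝒜, a ≠ b ∧
      ∀ x ∈ a, ∀ y ∈ b, ¬ x ≤ y ∧ ¬ y ≤ x :=
  stmt_19_general T hT hchain 𝒜 hunc hfin hdisj
end
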